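/- arXiv:1802.08672 — 2 statements merged into one kernel-verified Lean document; each statement's English description precedes it below -/
import Mathlib

section
/- Let N(n) be the number of mesh patterns of length n that contain at least one of the four mesh patterns 1^{(0,0)}, 1^{(1,0)}, 1^{(0,1)}, 1^{(1,1)}, and let T(n) = n!·2^{(n+1)^2} be the total number of mesh patterns of length n. Then N(n)/T(n) ≤ 8/n for all n ≥ 1; in particular the proportion of mesh patterns of length n containing any of these four patterns tends to 0 as n tends to infinity. -/
/-!
# The poset of mesh patterns

A mesh pattern is a permutation of `{1, ..., len}` together with a set of shaded
boxes in the `(len+1) × (len+1)` grid (boxes are indexed by their south-west corner,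
so boxes have coordinates in `{0, ..., len} × {0, ..., len}`).

We normalise the permutation as a function `ℕ → ℕ` (using 1-based indexing) which is
`0` outside of `[1, len]`; this makes equality of mesh patterns coincide with equality
of the underlying data.
-/

structure MeshPattern where
  len : ℕ
  perm : ℕ → ℕ
  sh : Finset (ℕ × ℕ)
  perm_mem : ∀ i, 1 ≤ i → i ≤ len → 1 ≤ perm i ∧ perm i ≤ len
  perm_zero : ∀ i, i = 0 ∨ len < i → perm i = 0
  perm_inj : ∀ i j, 1 ≤ i → i ≤ len → 1 ≤ j → j ≤ len → perm i = perm j → i = j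
  perm_surj : ∀ v, 1 ≤ v → v ≤ len → ∃ i, 1 ≤ i ∧ i ≤ len ∧ perm i = v
  sh_mem : ∀ q ∈ sh, q.1 ≤ len ∧ q.2 ≤ len

namespace MeshPattern

/-- The (1-based) position of the value `v` in the underlying permutation of `m`. -/
noncomputable def pos (m : MeshPattern) (v : ℕ) : ℕ := Function.invFun m.perm v

/-- The dimension of a mesh pattern: length of the permutation plus number of shaded boxes. -/
def dim (m : MeshPattern) : ℕ := m.len + m.sh.card

/-- Given (the position map of an occurrence) `η` of `m` in `p`, the extended column
boundary map: pattern column boundary `i` (for `0 ≤ i ≤ m.len + 1`) is sent to the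
corresponding column boundary in `p`.  Boxes of `p` with first coordinate `a` satisfying
`colExt m p η i ≤ a < colExt m p η (i+1)` are exactly the boxes lying horizontally
within the region corresponding to pattern boxes with first coordinate `i`. -/
def colExt (m p : MeshPattern) (η : ℕ → ℕ) (i : ℕ) : ℕ :=
  if i = 0 then 0 else if i ≤ m.len then η i else p.len + 1

/-- The analogous extended row (value) boundary map. -/
noncomputable def valExt (m p : MeshPattern) (η : ℕ → ℕ) (j : ℕ) : ℕ :=
  if j = 0 then 0 else if j ≤ m.len then p.perm (η (m.pos j)) else p.len + 1

/-- The box `(a, b)` of `p` lies in the region `R_η(i, j)` of the box `(i, j)` of `m`. -/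
def inRegion (m p : MeshPattern) (η : ℕ → ℕ) (i j a b : ℕ) : Prop :=
  colExt m p η i ≤ a ∧ a < colExt m p η (i + 1) ∧
    valExt m p η j ≤ b ∧ b < valExt m p η (j + 1)

/-- The point of `p` at position `y` lies in the open interior of the region `R_η(i, j)`. -/
def interiorPt (m p : MeshPattern) (η : ℕ → ℕ) (i j y : ℕ) : Prop :=
  colExt m p η i < y ∧ y < colExt m p η (i + 1) ∧
    valExt m p η j < p.perm y ∧ p.perm y < valExt m p η (j + 1)

/-- `η` is an occurrence of the mesh pattern `m` in the mesh pattern `p`: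
a (normalised) strictly increasing choice of positions realising the underlying
classical pattern, such that for every shaded box of `m` the corresponding region of `p`
contains no point of `p` in its interior and consists entirely of shaded boxes of `p`. -/
structure IsOcc (m p : MeshPattern) (η : ℕ → ℕ) : Prop where
  zero : ∀ i, i = 0 ∨ m.len < i → η i = 0
  mem : ∀ i, 1 ≤ i → i ≤ m.len → 1 ≤ η i ∧ η i ≤ p.len
  mono : ∀ i j, 1 ≤ i → i < j → j ≤ m.len → η i < η j
  pattern : ∀ i j, 1 ≤ i → i ≤ m.len → 1 ≤ j → j ≤ m.len →
    (m.perm i < m.perm j ↔ p.perm (η i) < p.perm (η j))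
  no_point : ∀ q ∈ m.sh, ∀ y, 1 ≤ y → y ≤ p.len → ¬ interiorPt m p η q.1 q.2 y
  shaded : ∀ q ∈ m.sh, ∀ a b, inRegion m p η q.1 q.2 a b → (a, b) ∈ p.sh

/-- The mesh pattern poset: `m ≤ p` iff there is an occurrence of `m` in `p`. -/
instance : LE MeshPattern := ⟨fun m p => ∃ η, IsOcc m p η⟩

instance : LT MeshPattern := ⟨fun m p => m ≤ p ∧ m ≠ p⟩

/-- `b` covers `a` in the mesh pattern poset. -/
def CovByM (a b : MeshPattern) : Prop := a < b ∧ ¬ ∃ z, a < z ∧ z < b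

open Classical in
/-- The Möbius function of a (locally finite) partial order `r`, computed with a fuel
parameter: `muFuel r n a b` is the Möbius function `μ(a, b)` provided `n` is at least the
length of the longest chain from `a` to `b` (with the convention `μ(a, b) = 0` if
`¬ r a b`). -/
noncomputable def muFuel {α : Type*} (r : α → α → Prop) : ℕ → α → α → ℤ
  | 0, a, b => if a = b then 1 else 0
  | n + 1, a, b =>
      if a = b then 1
      else if r a b then - ∑ᶠ c ∈ {c | r a c ∧ r c b ∧ c ≠ b}, muFuel r n a c
      else 0

/-- The Möbius function of the mesh pattern poset.  Since every chain from `m` to `p` has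
length at most `dim p`, the fuel `dim p + 1` is sufficient, so this is the genuine Möbius
function: `mu m m = 1`, `mu m p = -∑_{m ≤ c < p} mu m c` for `m < p`, and `mu m p = 0`
when `m ≰ p`. -/
noncomputable def mu (m p : MeshPattern) : ℤ := muFuel (· ≤ ·) (p.dim + 1) m p

/-- The classical permutation poset `𝓟`, realised as the subposet of unshaded mesh
patterns (for unshaded patterns, mesh occurrence is exactly classical pattern
containment).  Its Möbius function. -/
noncomputable def muP (σ π : {m : MeshPattern // m.sh = ∅}) : ℤ :=
  muFuel (· ≤ ·) (π.1.len + 1) σ π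

/-- The mesh pattern with underlying identity permutation of length `n`
and shaded boxes `s`. -/
def ofId (n : ℕ) (s : Finset (ℕ × ℕ)) (hs : ∀ q ∈ s, q.1 ≤ n ∧ q.2 ≤ n) : MeshPattern where
  len := n
  perm := fun i => if 1 ≤ i ∧ i ≤ n then i else 0
  sh := s
  perm_mem := by intro i h1 h2; (try dsimp only); rw [if_pos ⟨h1, h2⟩]; omega
  perm_zero := by intro i h; (try dsimp only); rw [if_neg]; omega
  perm_inj := by intro i j h1 h2 h3 h4 h; (try dsimp only at h); rw [if_pos ⟨h1, h2⟩, if_pos ⟨h3, h4⟩] at h; omega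
  perm_surj := by
    intro v h1 h2; exact ⟨v, h1, h2, by (try dsimp only); rw [if_pos ⟨h1, h2⟩]⟩
  sh_mem := hs

/-- The mesh pattern with underlying decreasing permutation of length `n`
and shaded boxes `s`. -/
def ofRev (n : ℕ) (s : Finset (ℕ × ℕ)) (hs : ∀ q ∈ s, q.1 ≤ n ∧ q.2 ≤ n) : MeshPattern where
  len := n
  perm := fun i => if 1 ≤ i ∧ i ≤ n then n + 1 - i else 0
  sh := s
  perm_mem := by intro i h1 h2; (try dsimp only); rw [if_pos ⟨h1, h2⟩]; omega
  perm_zero := by intro i h; (try dsimp only); rw [if_neg]; omega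
  perm_inj := by intro i j h1 h2 h3 h4 h; (try dsimp only at h); rw [if_pos ⟨h1, h2⟩, if_pos ⟨h3, h4⟩] at h; omega
  perm_surj := by
    intro v h1 h2
    exact ⟨n + 1 - v, by omega, by omega, by (try dsimp only); rw [if_pos ⟨by omega, by omega⟩]; omega⟩
  sh_mem := hs

/-- The unshaded singleton mesh pattern `1^∅`. -/
def one0 : MeshPattern := ofId 1 ∅ (by simp)

/-- The empty mesh pattern `ε^∅`. -/
def eps0 : MeshPattern := ofId 0 ∅ (by simp)

/-- The empty mesh pattern `ε^{(0,0)}` with its single box shaded. -/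
def eps00 : MeshPattern := ofId 0 {(0, 0)} (by decide)

/-- The singleton mesh patterns `1^{(a,b)}` for `a b ∈ {0,1}`. -/
def one00 : MeshPattern := ofId 1 {(0, 0)} (by decide)
def one10 : MeshPattern := ofId 1 {(1, 0)} (by decide)
def one01 : MeshPattern := ofId 1 {(0, 1)} (by decide)
def one11 : MeshPattern := ofId 1 {(1, 1)} (by decide)

/-- The mesh pattern `21^{(0,0),(1,0)}`. -/
def pat21 : MeshPattern := ofRev 2 {(0, 0), (1, 0)} (by decide)

/-- Replace the shading of `p` by a subset `A ⊆ sh p` (same underlying permutation):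
this is the mesh pattern `(cl p)^A`. -/
def reshade (p : MeshPattern) (A : Finset (ℕ × ℕ)) (hA : A ⊆ p.sh) : MeshPattern :=
  { p with sh := A, sh_mem := fun q hq => p.sh_mem q (hA hq) }

/-- The occurrence `η` of `s` in `p` uses the shaded box `(a, b) ∈ sh p`. -/
def UsesBox (s p : MeshPattern) (η : ℕ → ℕ) (a b : ℕ) : Prop :=
  (a, b) ∈ p.sh ∧ ∃ i j, (i, j) ∈ s.sh ∧ inRegion s p η i j a b

/-- The position map of the occurrence of `p − x` in `p` avoiding the point at
position `x`. -/
def etaDel (p : MeshPattern) (x : ℕ) : ℕ → ℕ := fun i =>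
  if 1 ≤ i ∧ i ≤ p.len - 1 then (if i < x then i else i + 1) else 0

/-- The underlying permutation of the pattern obtained from `p` by deleting the point at
position `x`. -/
def delPerm (p : MeshPattern) (x : ℕ) : ℕ → ℕ := fun i =>
  if 1 ≤ i ∧ i ≤ p.len - 1 then
    (if p.perm (etaDel p x i) < p.perm x then p.perm (etaDel p x i)
     else p.perm (etaDel p x i) - 1)
  else 0

/-- `q` is the mesh pattern `p − x` obtained from `p` by deleting the point at position
`x` (where `1 ≤ x ≤ len p`): the underlying permutation is obtained by deleting that
letter, and a box of `q` is shaded exactly when the corresponding region of `p` (under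
the occurrence `etaDel p x`) is entirely shaded and contains no point of `p` in its
interior.  In particular `etaDel p x` is an occurrence of `q` in `p`. -/
def IsDeletion (p : MeshPattern) (x : ℕ) (q : MeshPattern) : Prop :=
  1 ≤ x ∧ x ≤ p.len ∧ q.len + 1 = p.len ∧ q.perm = delPerm p x ∧
    ∀ i j : ℕ, ((i, j) ∈ q.sh ↔ i ≤ q.len ∧ j ≤ q.len ∧
      (∀ a b, inRegion q p (etaDel p x) i j a b → (a, b) ∈ p.sh) ∧
      ∀ y, 1 ≤ y → y ≤ p.len → ¬ interiorPt q p (etaDel p x) i j y)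

/-- Deleting the point at position `x` of `p` (with `q = p − x`) merges shadings:
some shaded box of `q` corresponds to more than one shaded box of `p`. -/
def MergesShadings (p : MeshPattern) (x : ℕ) (q : MeshPattern) : Prop :=
  ∃ i j, (i, j) ∈ q.sh ∧ ∃ a b a' b', (a, b) ≠ (a', b') ∧ (a, b) ∈ p.sh ∧
    (a', b') ∈ p.sh ∧ inRegion q p (etaDel p x) i j a b ∧
    inRegion q p (etaDel p x) i j a' b'

/-- `f 0 ⋖ f 1 ⋖ ⋯ ⋖ f k` is a maximal chain of length `k` from `a` to `b`. -/
def IsMaxChain (a b : MeshPattern) (k : ℕ) (f : ℕ → MeshPattern) : Prop :=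
  f 0 = a ∧ f k = b ∧ ∀ i < k, CovByM (f i) (f (i + 1))

/-- Underlying permutation of the direct sum `s ⊕ t`. -/
def dsumPerm (s t : MeshPattern) : ℕ → ℕ := fun i =>
  if i ≤ s.len then s.perm i
  else if i ≤ s.len + t.len then t.perm (i - s.len) + s.len
  else 0

/-- Shading of the direct sum `s ⊕ t`: the shadings of `s` and of `t` (translated), where
boxes on the shared boundary are extended to the new boundary (north/east for boxes of
`s`, south/west for boxes of `t`). -/
def dsumSh (s t : MeshPattern) : Finset (ℕ × ℕ) :=
  s.sh ∪ t.sh.image (fun q => (q.1 + s.len, q.2 + s.len)) ∪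
    (s.sh.filter (fun q => q.2 = s.len)).biUnion
      (fun q => (Finset.range (t.len + 1)).image (fun k => (q.1, s.len + k))) ∪
    (s.sh.filter (fun q => q.1 = s.len)).biUnion
      (fun q => (Finset.range (t.len + 1)).image (fun k => (s.len + k, q.2))) ∪
    (t.sh.filter (fun q => q.2 = 0)).biUnion
      (fun q => (Finset.range (s.len + 1)).image (fun k => (q.1 + s.len, k))) ∪
    (t.sh.filter (fun q => q.1 = 0)).biUnion
      (fun q => (Finset.range (s.len + 1)).image (fun k => (k, q.2 + s.len)))

/-- `r = s ⊕ t` is the direct sum of the mesh patterns `s` and `t` (defined when the top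
right corner box of `s` and the bottom left corner box of `t` are not shaded). -/
def IsDSum (s t r : MeshPattern) : Prop :=
  (s.len, s.len) ∉ s.sh ∧ (0, 0) ∉ t.sh ∧
    r.len = s.len + t.len ∧ r.perm = dsumPerm s t ∧ r.sh = dsumSh s t

/-- A mesh pattern is indecomposable if it cannot be written as a direct sum `a ⊕ b`
with neither `a` nor `b` equal to it. -/
def Indecomposable (m : MeshPattern) : Prop :=
  ¬ ∃ s t, s ≠ m ∧ t ≠ m ∧ IsDSum s t m

/-- `SumOfList L m`: `m` is the direct sum of the list `L` of mesh patterns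
(the empty list summing to the empty pattern `ε^∅`). -/
def SumOfList : List MeshPattern → MeshPattern → Prop
  | [], m => m.len = 0 ∧ m.sh = ∅
  | [a], m => a = m
  | a :: b :: rest, m => ∃ r, SumOfList (b :: rest) r ∧ IsDSum a r m

/-- Underlying permutation of the skew sum `s ⊖ t`. -/
def sksumPerm (s t : MeshPattern) : ℕ → ℕ := fun i =>
  if i = 0 then 0
  else if i ≤ s.len then s.perm i + t.len
  else if i ≤ s.len + t.len then t.perm (i - s.len)
  else 0

/-- Shading of the skew sum `s ⊖ t` (s placed to the north west of `t`), with boxes on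
the shared boundary extended to the new boundary. -/
def sksumSh (s t : MeshPattern) : Finset (ℕ × ℕ) :=
  s.sh.image (fun q => (q.1, q.2 + t.len)) ∪ t.sh.image (fun q => (q.1 + s.len, q.2)) ∪
    (s.sh.filter (fun q => q.1 = s.len)).biUnion
      (fun q => (Finset.range (t.len + 1)).image (fun k => (s.len + k, q.2 + t.len))) ∪
    (s.sh.filter (fun q => q.2 = 0)).biUnion
      (fun q => (Finset.range (t.len + 1)).image (fun k => (q.1, k))) ∪
    (t.sh.filter (fun q => q.2 = t.len)).biUnion
      (fun q => (Finset.range (s.len + 1)).image (fun k => (q.1 + s.len, t.len + k))) ∪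
    (t.sh.filter (fun q => q.1 = 0)).biUnion
      (fun q => (Finset.range (s.len + 1)).image (fun k => (k, q.2)))

/-- `r = s ⊖ t` is the skew sum of the mesh patterns `s` and `t` (defined when the bottom
right corner box of `s` and the top left corner box of `t` are not shaded). -/
def IsSkewSum (s t r : MeshPattern) : Prop :=
  (s.len, 0) ∉ s.sh ∧ (0, t.len) ∉ t.sh ∧
    r.len = s.len + t.len ∧ r.perm = sksumPerm s t ∧ r.sh = sksumSh s t

/-- A mesh pattern is skew-indecomposable if it cannot be written as a skew sum `a ⊖ b`
with neither `a` nor `b` equal to it. -/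
def SkewIndecomposable (m : MeshPattern) : Prop :=
  ¬ ∃ s t, s ≠ m ∧ t ≠ m ∧ IsSkewSum s t m

/-- Connectivity (zig-zag of comparabilities) inside a subset `I` of the mesh pattern
poset. -/
def ConnIn (I : Set MeshPattern) (a b : MeshPattern) : Prop :=
  Relation.ReflTransGen (fun u v => u ∈ I ∧ v ∈ I ∧ (u ≤ v ∨ v ≤ u)) a b

/-- The interval `[m, p]` is strongly disconnected: its open interior has at least two
connected components each containing more than one element. -/
def StronglyDisconnectedInterval (m p : MeshPattern) : Prop :=
  ∃ a b, (m < a ∧ a < p) ∧ (m < b ∧ b < p) ∧ ¬ ConnIn {c | m < c ∧ c < p} a b ∧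
    (∃ a', (m < a' ∧ a' < p) ∧ a' ≠ a ∧ ConnIn {c | m < c ∧ c < p} a a') ∧
    (∃ b', (m < b' ∧ b' < p) ∧ b' ≠ b ∧ ConnIn {c | m < c ∧ c < p} b b')

/-- The occurrence of `m` in `m ⊕ m` (or `m ⊖ m`) as the first `|m|` points. -/
def eta1 (m : MeshPattern) : ℕ → ℕ := fun i => if 1 ≤ i ∧ i ≤ m.len then i else 0

/-- The occurrence of `m` in `m ⊕ m` (or `m ⊖ m`) as the last `|m|` points. -/
def eta2 (m : MeshPattern) : ℕ → ℕ := fun i => if 1 ≤ i ∧ i ≤ m.len then i + m.len else 0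

/-- `i` (with `2 ≤ i ≤ len`) is the position of an adjacency tail: the letter at
position `i` differs by one from the letter at position `i - 1`. -/
def IsAdjTail (m : MeshPattern) (i : ℕ) : Prop :=
  2 ≤ i ∧ i ≤ m.len ∧ (m.perm i = m.perm (i - 1) + 1 ∨ m.perm (i - 1) = m.perm i + 1)

open Classical in
/-- `adj(cl m)`: the number of adjacency tails of the underlying permutation of `m`. -/
noncomputable def adjCount (m : MeshPattern) : ℕ :=
  ((Finset.range (m.len + 1)).filter (fun i => IsAdjTail m i)).card

/-- The total number of mesh patterns of length `n`. -/
def Tcount (n : ℕ) : ℕ := n.factorial * 2 ^ ((n + 1) ^ 2)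

end MeshPattern

/-- Binary words, partially ordered by (not necessarily contiguous) subword containment:
the poset `𝓦`. -/
structure Word where
  toList : List Bool

instance : LE Word := ⟨fun u w => u.toList.Sublist w.toList⟩

/-- The binary word associated to a mesh pattern `m` in the class `Γ`: it has length
`|m| - 1`, and for each letter `i` with `2 ≤ i ≤ |m|` the corresponding entry is
`false` (i.e. `0`) if the letter `i` appears before the letter `1` in `cl m`,
and `true` (i.e. `1`) otherwise. -/
noncomputable def MeshPattern.wordOf (m : MeshPattern) : List Bool :=
  (List.range (m.len - 1)).map (fun k => if m.pos (k + 2) < m.pos 1 then false else true)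

namespace MeshPattern

/-- `p` contains one of the four shaded singleton mesh patterns
`1^{(0,0)}, 1^{(1,0)}, 1^{(0,1)}, 1^{(1,1)}`. -/
def ContainsShadedSingle (p : MeshPattern) : Prop :=
  one00 ≤ p ∨ one10 ≤ p ∨ one01 ≤ p ∨ one11 ≤ p

/-- The number of mesh patterns of length `n` containing one of the four shaded
singleton mesh patterns. -/
noncomputable def Ncount (n : ℕ) : ℕ :=
  {p : MeshPattern | p.len = n ∧ ContainsShadedSingle p}.ncard

end MeshPattern

/-! If `p` contains `1^{(a,b)}`, then some point `(i, p(i))` of `p` has all boxes of one of its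
four quadrants shaded, and up to reflection that quadrant has `i * p(i)` boxes. In a uniformly
random mesh pattern of length `n`, the value `p(i)` is uniform on `{1, ..., n}` and independent of
the shading, so a union bound over the four quadrants and the `n` positions bounds the proportion
by `(4 / n) * ∑_{i, v ≤ n} 2^{-iv} ≤ 8 / n`. -/

open Finset Equiv
open scoped Nat

theorem Finset.card_filter_superset {β : Type*} [Fintype β] [DecidableEq β] (R : Finset β) :
    #{S : Finset β | R ⊆ S} = 2 ^ (Fintype.card β - #R) := by
  rw [← Finset.card_univ, ← card_Icc_finset (subset_univ R)]
  congr 1; ext S; simp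

namespace Equiv.Perm
variable {α : Type*} [Fintype α] [DecidableEq α]

theorem card_filter_apply_eq_eq (a b b' : α) :
    #{σ : Perm α | σ a = b} = #{σ : Perm α | σ a = b'} :=
  card_bij' (fun σ _ => swap b b' * σ) (fun σ _ => swap b b' * σ)
    (by simp +contextual) (by simp +contextual) (by simp) (by simp)

theorem card_mul_card_filter_apply_eq (a b : α) :
    Fintype.card α * #{σ : Perm α | σ a = b} = (Fintype.card α)! := calc
  _ = ∑ b' : α, #{σ : Perm α | σ a = b'} := by
    simp [card_filter_apply_eq_eq a _ b, Finset.card_univ]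
  _ = (Fintype.card α)! := by
    rw [← card_eq_sum_card_fiberwise fun σ _ => mem_univ (σ a), Finset.card_univ,
      Fintype.card_perm]

theorem card_smul_sum_apply {M : Type*} [AddCommMonoid M] (a : α) (f : α → M) :
    Fintype.card α • ∑ σ : Perm α, f (σ a) = (Fintype.card α)! • ∑ b, f b := by
  rw [← sum_fiberwise univ (fun σ : Perm α => σ a), smul_sum, smul_sum]
  refine sum_congr rfl fun b _ => ?_
  rw [sum_congr rfl fun σ hσ => by rw [(mem_filter.1 hσ).2], sum_const, smul_smul,
    card_mul_card_filter_apply_eq]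

theorem card_mul_card_filter_subset_apply {β : Type*} [Fintype β] [DecidableEq β] (a : α)
    (R : α → Finset β) :
    (Fintype.card α : ℝ) * #{x : Perm α × Finset β | R (x.1 a) ⊆ x.2} =
      (Fintype.card α)! * 2 ^ Fintype.card β * ∑ b, (1 / 2 : ℝ) ^ #(R b) := by
  have hsuperset (T : Finset β) :
      (#{S : Finset β | T ⊆ S} : ℝ) = 2 ^ Fintype.card β * (1 / 2) ^ #T := by
    rw [card_filter_superset, Nat.cast_pow, Nat.cast_ofNat,
      pow_sub₀ _ two_ne_zero (card_le_univ T), one_div, inv_pow]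
  have hfiber : #{x : Perm α × Finset β | R (x.1 a) ⊆ x.2} =
      ∑ σ : Perm α, #{S : Finset β | R (σ a) ⊆ S} := by
    simp only [card_filter, Fintype.sum_prod_type]
  have key := card_smul_sum_apply a fun b => (1 / 2 : ℝ) ^ #(R b)
  rw [nsmul_eq_mul, nsmul_eq_mul] at key
  rw [hfiber, Nat.cast_sum]
  simp only [hsuperset]
  rw [← mul_sum, mul_left_comm, key]
  ring

end Equiv.Perm

theorem sum_sum_half_pow_mul_le (n : ℕ) :
    ∑ k ∈ range n, ∑ l ∈ range n, (1 / 2 : ℝ) ^ ((k + 1) * (l + 1)) ≤ 2 := by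
  calc _ ≤ ∑ k ∈ range n, ∑ l ∈ range n, (1 / 2 : ℝ) * ((1 / 2) ^ k * (1 / 2) ^ l) := by
        gcongr with k _ l _
        rw [← pow_add, ← pow_succ' (1 / 2 : ℝ)]
        exact pow_le_pow_of_le_one (by norm_num) (by norm_num) (by nlinarith)
    _ = 1 / 2 * ((∑ k ∈ range n, (1 / 2 : ℝ) ^ k) * ∑ l ∈ range n, (1 / 2) ^ l) := by
        rw [sum_mul_sum, mul_sum]
        simp_rw [mul_sum]
    _ ≤ 1 / 2 * (2 * 2) := by
        gcongr <;> first | positivity | exact sum_geometric_two_le n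
    _ = 2 := by norm_num

namespace MeshPattern

abbrev Box (n : ℕ) := Fin (n + 1) × Fin (n + 1)

section ofPerm

variable {n : ℕ} (σ : Perm (Fin n)) (S : Finset (Box n))

def ofPerm : MeshPattern where
  len := n
  perm j := if h : 1 ≤ j ∧ j ≤ n then σ ⟨j - 1, by omega⟩ + 1 else 0
  sh := S.image (Prod.map Fin.val Fin.val)
  perm_mem j h₁ h₂ := by simp only [dif_pos (And.intro h₁ h₂)]; omega
  perm_zero j h := dif_neg (by omega)
  perm_inj i j hi₁ hi₂ hj₁ hj₂ h := by
    simp only [dif_pos (And.intro hi₁ hi₂), dif_pos (And.intro hj₁ hj₂), add_left_inj,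
      Fin.val_inj, σ.injective.eq_iff, Fin.mk.injEq] at h
    omega
  perm_surj v h₁ h₂ := by
    refine ⟨σ.symm ⟨v - 1, by omega⟩ + 1, by omega, by omega, ?_⟩
    rw [dif_pos (by omega)]
    simp only [Nat.add_sub_cancel, Fin.eta, apply_symm_apply]
    omega
  sh_mem q hq := by
    obtain ⟨⟨x, y⟩, -, rfl⟩ := mem_image.1 hq
    exact ⟨Nat.lt_succ_iff.1 x.2, Nat.lt_succ_iff.1 y.2⟩

@[simp] lemma ofPerm_len : (ofPerm σ S).len = n := rfl

lemma ofPerm_perm_succ (k : Fin n) : (ofPerm σ S).perm (k + 1) = σ k + 1 := by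
  simp [ofPerm]

lemma val_mem_ofPerm_sh {q : Box n} :
    ((q.1 : ℕ), (q.2 : ℕ)) ∈ (ofPerm σ S).sh ↔ q ∈ S :=
  (Prod.map_injective.2 ⟨Fin.val_injective, Fin.val_injective⟩).mem_finset_image

end ofPerm

lemma exists_ofPerm {n : ℕ} {p : MeshPattern} (hp : p.len = n) :
    ∃ (σ : Perm (Fin n)) (S : Finset (Box n)), ofPerm σ S = p := by
  subst hp
  have hmem (k : Fin p.len) := p.perm_mem (k + 1) (by omega) (by omega)
  let f (k : Fin p.len) : Fin p.len := ⟨p.perm (k + 1) - 1, by have := hmem k; omega⟩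
  have hf : Function.Injective f := fun k l hkl => by
    have := p.perm_inj (k + 1) (l + 1) (by omega) (by omega) (by omega) (by omega)
      (by have := hmem k; have := hmem l; simp only [f, Fin.mk.injEq] at hkl; omega)
    omega
  refine ⟨Equiv.ofBijective f (Finite.injective_iff_bijective.1 hf),
    ({q | ((q.1 : ℕ), (q.2 : ℕ)) ∈ p.sh} : Finset _), ?_⟩
  obtain ⟨len, perm, sh, perm_mem, perm_zero, -, -, sh_mem⟩ := p
  simp only [ofPerm, mk.injEq, true_and]
  constructor
  · funext j
    split_ifs with hj
    · have := perm_mem j hj.1 hj.2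
      simp only [Equiv.ofBijective_apply, f]
      rw [Nat.sub_add_cancel hj.1]
      omega
    · exact (perm_zero j (by omega)).symm
  · ext ⟨x, y⟩
    simp only [mem_image, mem_filter, mem_univ, true_and, Prod.exists, Prod.map_apply,
      Prod.mk.injEq]
    constructor
    · rintro ⟨a, b, h, rfl, rfl⟩
      exact h
    · intro h
      have := sh_mem _ h
      exact ⟨⟨x, by omega⟩, ⟨y, by omega⟩, h, rfl, rfl⟩

lemma ncard_len_eq_le (n : ℕ) (P : MeshPattern → Prop) :
    {p : MeshPattern | p.len = n ∧ P p}.ncard ≤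
      {x : Perm (Fin n) × Finset (Box n) | P (ofPerm x.1 x.2)}.ncard := calc
  _ ≤ ((fun x => ofPerm x.1 x.2) ''
      {x : Perm (Fin n) × Finset (Box n) | P (ofPerm x.1 x.2)}).ncard := by
    refine Set.ncard_le_ncard ?_ (Set.toFinite _)
    rintro p ⟨hp, hP⟩
    obtain ⟨σ, S, rfl⟩ := exists_ofPerm hp
    exact ⟨(σ, S), hP, rfl⟩
  _ ≤ _ := Set.ncard_image_le (Set.toFinite _)

def single (a b : Bool) : MeshPattern :=
  ofId 1 {(a.toNat, b.toNat)} (by simp [Bool.toNat_le])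

lemma exists_single_le_of_containsShadedSingle {p : MeshPattern} (h : ContainsShadedSingle p) :
    ∃ a b, single a b ≤ p := by
  rcases h with h | h | h | h
  exacts [⟨false, false, h⟩, ⟨true, false, h⟩, ⟨false, true, h⟩, ⟨true, true, h⟩]

lemma single_pos_one (a b : Bool) : (single a b).pos 1 = 1 := by
  set j := (single a b).pos 1
  have h : (if 1 ≤ j ∧ j ≤ 1 then j else 0) = 1 :=
    Function.invFun_eq (f := (single a b).perm) ⟨1, rfl⟩
  split_ifs at h
  omega

lemma exists_shaded_quadrant_of_single_le {a b : Bool} {p : MeshPattern} (h : single a b ≤ p) :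
    ∃ i, 1 ≤ i ∧ i ≤ p.len ∧ ∀ x y, x ≤ p.len → y ≤ p.len →
      (i ≤ x ↔ a) → (p.perm i ≤ y ↔ b) → (x, y) ∈ p.sh := by
  obtain ⟨η, hη⟩ := h
  obtain ⟨hη₁, hηlen⟩ := hη.mem 1 le_rfl le_rfl
  refine ⟨η 1, hη₁, hηlen, fun x y hx hy hxa hyb =>
    hη.shaded _ (mem_singleton_self _) x y ?_⟩
  have hlen : (single a b).len = 1 := rfl
  simp only [inRegion, colExt, valExt, hlen]
  cases a <;> cases b <;> (simp [single_pos_one] at hxa hyb ⊢; omega)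

section quadrant

variable {n : ℕ}

/-- `side false k` consists of the box columns (or rows) `0, ..., k`, which lie left of (below)
the point in column `k + 1`; `side true k` consists of those right of (above) it. -/
def side (a : Bool) (k : Fin n) : Finset (Fin (n + 1)) :=
  if a then Ioi k.castSucc else Iic k.castSucc

def quadrant (a b : Bool) (k v : Fin n) : Finset (Box n) :=
  side a k ×ˢ side b v

lemma mem_side {a : Bool} {k : Fin n} {x : Fin (n + 1)} :
    x ∈ side a k ↔ ((k : ℕ) + 1 ≤ x ↔ a) := by
  cases a <;> simp [side, Fin.lt_def, Fin.le_def]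

lemma exists_quadrant_subset_of_single_le {a b : Bool} {σ : Perm (Fin n)}
    {S : Finset (Box n)} (h : single a b ≤ ofPerm σ S) :
    ∃ k, quadrant a b k (σ k) ⊆ S := by
  obtain ⟨i, hi₁, hin, hsh⟩ := exists_shaded_quadrant_of_single_le h
  obtain ⟨k, rfl⟩ : ∃ k : Fin n, (k : ℕ) + 1 = i :=
    ⟨⟨i - 1, by simp at hin; omega⟩, by simp; omega⟩
  refine ⟨k, fun q hq => ?_⟩
  rw [quadrant, mem_product, mem_side, mem_side] at hq
  rw [← val_mem_ofPerm_sh σ S]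
  refine hsh _ _ (Nat.lt_succ_iff.1 q.1.2) (Nat.lt_succ_iff.1 q.2.2) hq.1 ?_
  rw [ofPerm_perm_succ]
  exact hq.2

lemma sum_card_side {M : Type*} [AddCommMonoid M] (a : Bool) (g : ℕ → M) :
    ∑ k : Fin n, g #(side a k) = ∑ k ∈ range n, g (k + 1) := by
  rw [← Fin.sum_univ_eq_sum_range (fun k => g (k + 1))]
  cases a
  · simp [side]
  · refine Fintype.sum_equiv Fin.revPerm _ _ fun k => ?_
    rw [side, if_pos rfl, Fin.card_Ioi, Fin.val_castSucc, Fin.revPerm_apply, Fin.val_rev]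
    congr 1
    omega

lemma sum_sum_half_pow_card_quadrant_le (a b : Bool) :
    ∑ k : Fin n, ∑ v : Fin n, (1 / 2 : ℝ) ^ #(quadrant a b k v) ≤ 2 := by
  simp only [quadrant, card_product]
  rw [sum_card_side a fun x => ∑ v : Fin n, (1 / 2 : ℝ) ^ (x * #(side b v))]
  refine le_of_eq_of_le (sum_congr rfl fun k _ => ?_) (sum_sum_half_pow_mul_le n)
  exact sum_card_side b fun y => (1 / 2 : ℝ) ^ ((k + 1) * y)

end quadrant

lemma Ncount_le (n : ℕ) :
    Ncount n ≤ ∑ a : Bool, ∑ b : Bool, ∑ k : Fin n,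
      #{x : Perm (Fin n) × Finset (Box n) | quadrant a b k (x.1 k) ⊆ x.2} := by
  classical
  calc Ncount n
      ≤ {x : Perm (Fin n) × Finset (Box n) |
          ContainsShadedSingle (ofPerm x.1 x.2)}.ncard := ncard_len_eq_le n _
    _ ≤ #(univ.biUnion fun c : Bool × Bool × Fin n =>
          {x : Perm (Fin n) × Finset (Box n) |
            quadrant c.1 c.2.1 c.2.2 (x.1 c.2.2) ⊆ x.2}) := by
        rw [← Set.ncard_coe_finset]
        refine Set.ncard_le_ncard (fun x hx => ?_) (Set.toFinite _)
        obtain ⟨a, b, hab⟩ := exists_single_le_of_containsShadedSingle hx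
        obtain ⟨k, hk⟩ := exists_quadrant_subset_of_single_le hab
        simp only [coe_biUnion, coe_univ, Set.mem_univ, Set.iUnion_true, Set.mem_iUnion,
          mem_coe, mem_filter_univ, Prod.exists]
        exact ⟨a, b, k, hk⟩
    _ ≤ ∑ c : Bool × Bool × Fin n, #{x : Perm (Fin n) × Finset (Box n) |
          quadrant c.1 c.2.1 c.2.2 (x.1 c.2.2) ⊆ x.2} := card_biUnion_le
    _ = _ := by simp only [Fintype.sum_prod_type]

lemma n_mul_Ncount_le (n : ℕ) : (n : ℝ) * Ncount n ≤ 8 * Tcount n := calc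
  (n : ℝ) * Ncount n ≤ n * ∑ a : Bool, ∑ b : Bool, ∑ k : Fin n,
      (#{x : Perm (Fin n) × Finset (Box n) | quadrant a b k (x.1 k) ⊆ x.2} : ℝ) := by
    gcongr
    exact_mod_cast Ncount_le n
  _ = ∑ a : Bool, ∑ b : Bool, n ! * 2 ^ (n + 1) ^ 2 *
      ∑ k : Fin n, ∑ v : Fin n, (1 / 2 : ℝ) ^ #(quadrant a b k v) := by
    simp only [mul_sum]
    refine sum_congr rfl fun a _ => sum_congr rfl fun b _ => sum_congr rfl fun k _ => ?_
    simpa [Fintype.card_prod, sq, mul_sum] using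
      Perm.card_mul_card_filter_subset_apply k (quadrant a b k)
  _ ≤ ∑ a : Bool, ∑ b : Bool, n ! * 2 ^ (n + 1) ^ 2 * (2 : ℝ) := by
    gcongr with a _ b _
    exact sum_sum_half_pow_card_quadrant_le a b
  _ = 8 * Tcount n := by
    simp only [sum_const, Finset.card_univ, Fintype.card_bool, Tcount]
    push_cast
    ring

/-- The proportion of mesh patterns of length `n` containing one of the four shaded
singleton patterns is at most `8 / n`; in particular it tends to `0`. -/
theorem proportion_containing_shaded_single :
    (∀ n : ℕ, 1 ≤ n → (Ncount n : ℝ) / (Tcount n : ℝ) ≤ 8 / (n : ℝ)) ∧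
    Filter.Tendsto (fun n => (Ncount n : ℝ) / (Tcount n : ℝ)) Filter.atTop (nhds 0) := by
  have hbound (n : ℕ) (hn : 1 ≤ n) : (Ncount n : ℝ) / (Tcount n : ℝ) ≤ 8 / (n : ℝ) := by
    have hT : (0 : ℝ) < Tcount n := by unfold Tcount; positivity
    rw [div_le_div_iff₀ hT (by positivity)]
    linarith [n_mul_Ncount_le n]
  refine ⟨hbound, squeeze_zero' (Filter.Eventually.of_forall fun n => by positivity)
    ?_ (tendsto_const_div_atTop_nhds_zero_nat 8)⟩
  filter_upwards [Filter.eventually_ge_atTop 1] with n hn using hbound n hn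

end MeshPattern
end

section
/- Let Z(n) be the number of mesh patterns p of length n with μ(1^∅, p) = 0 in the mesh pattern poset, and let T(n) = n!·2^{(n+1)^2} be the total number of mesh patterns of length n. Then Z(n)/T(n) tends to 1 as n tends to infinity. -/
namespace MeshPattern

/-- The number of mesh patterns of length `n` with `μ(1^∅, p) = 0`. -/
noncomputable def Zcount (n : ℕ) : ℕ :=
  {p : MeshPattern | p.len = n ∧ mu one0 p = 0}.ncard

end MeshPattern

/-!
Call a shaded box of a mesh pattern `p` *anchored* if it lies in a rectangle of shaded boxes
that touches the boundary of the grid and contains no point of `p`. An occurrence of `c` in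
`p` maps such rectangles of `c` onto such rectangles of `p`, so if every shaded box of `c` is
anchored, every box of `p` used by an occurrence of `c` is anchored.

By induction on the length, `μ(1^∅, p) ≠ 0` forces every shaded box of `p` to be anchored.
Suppose `β` is not. The patterns strictly below `p^A` are the `p^B` with `B ⊊ A` and shorter
patterns, and a shorter pattern with nonzero Möbius value, being anchored by induction, lies
below `p^(A ∪ {β})` iff it lies below `p^A`. Comparing the defining recursions at `A ∪ {β}` and at `A` gives
`∑_{B ⊆ A} μ(1^∅, p^(B ∪ {β})) = 0` for every `A ⊆ sh p \ {β}`, so all these values vanish,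
in particular `μ(1^∅, p)`.

An anchored pattern is determined by its permutation and four staircases (how far anchored
rectangles reach in from each edge along each row or column), so at most
`(n+1)^n (n+2)^(4(n+1))` of the `n! 2^((n+1)^2)` patterns of length `n` are anchored.
-/

theorem exists_le_lt_succ {α : Type*} [LinearOrder α] {f : ℕ → α} {a : α} (h0 : f 0 ≤ a) :
    ∀ {N : ℕ}, a < f (N + 1) → ∃ i ≤ N, f i ≤ a ∧ a < f (i + 1)
  | 0, hN => ⟨0, le_rfl, h0, hN⟩
  | N + 1, hN => by
    by_cases h : f (N + 1) ≤ a
    · exact ⟨N + 1, le_rfl, h, hN⟩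
    · obtain ⟨i, hi, hfi⟩ := exists_le_lt_succ h0 (not_le.mp h)
      exact ⟨i, hi.trans N.le_succ, hfi⟩

theorem Monotone.mem_Icc_of_mem_Ico {α : Type*} [Preorder α] {f : ℕ → α} (hf : Monotone f)
    {i₁ i₂ i : ℕ} {a : α} (ha : a ∈ Set.Ico (f i₁) (f (i₂ + 1)))
    (hi : a ∈ Set.Ico (f i) (f (i + 1))) : i ∈ Set.Icc i₁ i₂ :=
  ⟨Nat.lt_add_one_iff.mp (hf.reflect_lt (ha.1.trans_lt hi.2)),
    Nat.lt_add_one_iff.mp (hf.reflect_lt (hi.1.trans_lt ha.2))⟩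

theorem Fin.eq_of_clamp_eq {a b n : ℕ} (ha : a ≤ n) (hb : b ≤ n)
    (h : Fin.clamp a n = Fin.clamp b n) : a = b := by
  have := congrArg Fin.val h
  simp only [Fin.coe_clamp] at this
  omega

theorem Finset.eq_zero_of_forall_sum_powerset_eq_zero {α M : Type*} [DecidableEq α]
    [AddCommMonoid M] {φ : Finset α → M} (A : Finset α)
    (h : ∀ A' ⊆ A, ∑ B ∈ A'.powerset, φ B = 0) : φ A = 0 := by
  induction A using Finset.strongInduction with
  | H A ih =>
    have hrest : ∑ B ∈ A.powerset.erase A, φ B = 0 := Finset.sum_eq_zero fun B hB => by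
      obtain ⟨hne, hB⟩ := Finset.mem_erase.mp hB
      have hBA := Finset.mem_powerset.mp hB
      exact ih B (hBA.ssubset_of_ne hne) fun A' hA' => h A' (hA'.trans hBA)
    have := h A le_rfl
    rwa [← Finset.add_sum_erase _ _ (Finset.mem_powerset_self A), hrest, add_zero] at this

open Classical in
noncomputable def reachBelow (N : ℕ) (P : ℕ → Prop) : ℕ :=
  (Finset.range N).sup fun k => if P k then k + 1 else 0

theorem lt_reachBelow_iff {N x : ℕ} {P : ℕ → Prop} :
    x < reachBelow N P ↔ ∃ k < N, P k ∧ x ≤ k := by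
  classical
  simp only [reachBelow, Finset.lt_sup_iff, Finset.mem_range]
  refine ⟨fun ⟨k, hk, hx⟩ => ?_, fun ⟨k, hk, hP, hx⟩ => ⟨k, hk, by rw [if_pos hP]; omega⟩⟩
  split_ifs at hx with hP
  · exact ⟨k, hk, hP, by omega⟩
  · omega

theorem reachBelow_le (N : ℕ) (P : ℕ → Prop) : reachBelow N P ≤ N := by
  classical
  refine Finset.sup_le fun k hk => ?_
  rw [Finset.mem_range] at hk
  split_ifs <;> omega

open Filter Topology in
theorem tendsto_pow_mul_succ_div_two_pow_sq (k : ℕ) :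
    Tendsto (fun n : ℕ => ((n : ℝ) + 2) ^ (k * (n + 1)) / 2 ^ ((n + 1) ^ 2)) atTop (𝓝 0) := by
  have hx : Tendsto (fun n : ℕ => ((n : ℝ) + 2) ^ k / 2 ^ (n + 1)) atTop (𝓝 0) := by
    have h := ((tendsto_pow_const_div_const_pow_of_one_lt k one_lt_two).comp
      (tendsto_add_atTop_nat 2)).const_mul 2
    rw [mul_zero] at h
    refine h.congr fun n => ?_
    simp only [Function.comp_apply, Nat.cast_add, Nat.cast_ofNat, pow_succ]
    field_simp
  refine squeeze_zero' (Eventually.of_forall fun n => by positivity) ?_ hx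
  filter_upwards [hx.eventually_le_const one_pos] with n hn
  calc ((n : ℝ) + 2) ^ (k * (n + 1)) / 2 ^ ((n + 1) ^ 2)
      = (((n : ℝ) + 2) ^ k / 2 ^ (n + 1)) ^ (n + 1) := by rw [div_pow, ← pow_mul, ← pow_mul, sq]
    _ ≤ ((n : ℝ) + 2) ^ k / 2 ^ (n + 1) := pow_le_of_le_one (by positivity) hn n.succ_ne_zero

namespace MeshPattern

theorem ext {p q : MeshPattern} (hlen : p.len = q.len) (hperm : p.perm = q.perm)
    (hsh : p.sh = q.sh) : p = q := by
  cases p; cases q; simp_all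

theorem perm_le_len (m : MeshPattern) (i : ℕ) : m.perm i ≤ m.len := by
  by_cases h : 1 ≤ i ∧ i ≤ m.len
  · exact (m.perm_mem i h.1 h.2).2
  · rw [m.perm_zero i (by omega)]
    exact Nat.zero_le _

theorem perm_pos {m : MeshPattern} {v : ℕ} (h1 : 1 ≤ v) (h2 : v ≤ m.len) :
    m.perm (m.pos v) = v := by
  obtain ⟨i, -, -, hi⟩ := m.perm_surj v h1 h2
  exact Function.invFun_eq ⟨i, hi⟩

theorem pos_mem {m : MeshPattern} {v : ℕ} (h1 : 1 ≤ v) (h2 : v ≤ m.len) :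
    1 ≤ m.pos v ∧ m.pos v ≤ m.len := by
  have h := perm_pos h1 h2
  by_contra hout
  rw [m.perm_zero _ (by omega)] at h
  omega

theorem pos_perm {m : MeshPattern} {i : ℕ} (h1 : 1 ≤ i) (h2 : i ≤ m.len) :
    m.pos (m.perm i) = i := by
  obtain ⟨hv1, hv2⟩ := m.perm_mem i h1 h2
  obtain ⟨hp1, hp2⟩ := pos_mem hv1 hv2
  exact m.perm_inj _ _ hp1 hp2 h1 h2 (perm_pos hv1 hv2)

section Boundary

variable {m p : MeshPattern} {η : ℕ → ℕ} {i j : ℕ}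

theorem colExt_zero : colExt m p η 0 = 0 := rfl

theorem colExt_of_len_lt (h : m.len < i) : colExt m p η i = p.len + 1 := by
  simp [colExt, show i ≠ 0 by omega, show ¬ i ≤ m.len by omega]

theorem colExt_of_le (h1 : 1 ≤ i) (h2 : i ≤ m.len) : colExt m p η i = η i := by
  simp [colExt, show i ≠ 0 by omega, h2]

theorem valExt_zero : valExt m p η 0 = 0 := rfl

theorem valExt_of_len_lt (h : m.len < j) : valExt m p η j = p.len + 1 := by
  simp [valExt, show j ≠ 0 by omega, show ¬ j ≤ m.len by omega]

theorem valExt_of_le (h1 : 1 ≤ j) (h2 : j ≤ m.len) :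
    valExt m p η j = p.perm (η (m.pos j)) := by
  simp [valExt, show j ≠ 0 by omega, h2]

theorem valExt_perm (h1 : 1 ≤ i) (h2 : i ≤ m.len) :
    valExt m p η (m.perm i) = p.perm (η i) := by
  obtain ⟨hv1, hv2⟩ := m.perm_mem i h1 h2
  rw [valExt_of_le hv1 hv2, pos_perm h1 h2]

namespace IsOcc

variable (hη : IsOcc m p η)
include hη

theorem colExt_lt_succ (h : i ≤ m.len) : colExt m p η i < colExt m p η (i + 1) := by
  rcases Nat.lt_or_ge m.len (i + 1) with hi | hi
  · rw [colExt_of_len_lt hi]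
    rcases Nat.eq_zero_or_pos i with rfl | h0
    · exact Nat.succ_pos _
    · rw [colExt_of_le h0 h]
      exact Nat.lt_succ_of_le (hη.mem i h0 h).2
  · rw [colExt_of_le (by omega) hi]
    rcases Nat.eq_zero_or_pos i with rfl | h0
    · exact (hη.mem 1 le_rfl hi).1
    · rw [colExt_of_le h0 h]
      exact hη.mono i (i + 1) h0 (by omega) hi

theorem monotone_colExt : Monotone (colExt m p η) :=
  monotone_nat_of_le_succ fun i => by
    rcases Nat.lt_or_ge m.len i with h | h
    · rw [colExt_of_len_lt h, colExt_of_len_lt (by omega)]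
    · exact (hη.colExt_lt_succ h).le

theorem colExt_le_len_succ (i : ℕ) : colExt m p η i ≤ p.len + 1 := by
  calc colExt m p η i ≤ colExt m p η (i + m.len + 1) := hη.monotone_colExt (by omega)
    _ = p.len + 1 := colExt_of_len_lt (by omega)

theorem colExt_lt (hij : i < j) (hj : j ≤ m.len + 1) : colExt m p η i < colExt m p η j :=
  (hη.colExt_lt_succ (by omega)).trans_le (hη.monotone_colExt hij)

theorem valExt_lt_succ (h : j ≤ m.len) : valExt m p η j < valExt m p η (j + 1) := by
  rcases Nat.lt_or_ge m.len (j + 1) with hj | hj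
  · rw [valExt_of_len_lt hj]
    rcases Nat.eq_zero_or_pos j with rfl | h0
    · exact Nat.succ_pos _
    · rw [valExt_of_le h0 h]
      exact Nat.lt_succ_of_le (p.perm_le_len _)
  · obtain ⟨hp1, hp2⟩ := pos_mem (m := m) (v := j + 1) (by omega) hj
    obtain ⟨hη1, hη2⟩ := hη.mem _ hp1 hp2
    rw [valExt_of_le (by omega) hj]
    rcases Nat.eq_zero_or_pos j with rfl | h0
    · exact (p.perm_mem _ hη1 hη2).1
    · obtain ⟨hq1, hq2⟩ := pos_mem (m := m) h0 h
      rw [valExt_of_le h0 h, ← hη.pattern _ _ hq1 hq2 hp1 hp2, perm_pos h0 h,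
        perm_pos (by omega) hj]
      exact Nat.lt_succ_self j

theorem monotone_valExt : Monotone (valExt m p η) :=
  monotone_nat_of_le_succ fun j => by
    rcases Nat.lt_or_ge m.len j with h | h
    · rw [valExt_of_len_lt h, valExt_of_len_lt (by omega)]
    · exact (hη.valExt_lt_succ h).le

theorem valExt_le_len_succ (j : ℕ) : valExt m p η j ≤ p.len + 1 := by
  calc valExt m p η j ≤ valExt m p η (j + m.len + 1) := hη.monotone_valExt (by omega)
    _ = p.len + 1 := valExt_of_len_lt (by omega)

theorem valExt_lt (hij : i < j) (hj : j ≤ m.len + 1) : valExt m p η i < valExt m p η j :=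
  (hη.valExt_lt_succ (by omega)).trans_le (hη.monotone_valExt hij)

end IsOcc

end Boundary

section Regions

variable {m p : MeshPattern} {η : ℕ → ℕ}

theorem exists_inRegion {a b : ℕ} (ha : a ≤ p.len) (hb : b ≤ p.len) :
    ∃ i ≤ m.len, ∃ j ≤ m.len, inRegion m p η i j a b := by
  obtain ⟨i, hi, hai⟩ := exists_le_lt_succ (f := colExt m p η) (Nat.zero_le a)
    (show a < colExt m p η (m.len + 1) by rw [colExt_of_len_lt (by omega)]; omega)
  obtain ⟨j, hj, hbj⟩ := exists_le_lt_succ (f := valExt m p η) (Nat.zero_le b)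
    (show b < valExt m p η (m.len + 1) by rw [valExt_of_len_lt (by omega)]; omega)
  exact ⟨i, hi, j, hj, hai.1, hai.2, hbj.1, hbj.2⟩

theorem IsOcc.exists_interiorPt (hη : IsOcc m p η) {y : ℕ} (hy1 : 1 ≤ y) (hy2 : y ≤ p.len)
    (hne : ∀ i, 1 ≤ i → i ≤ m.len → η i ≠ y) :
    ∃ i ≤ m.len, ∃ j ≤ m.len, interiorPt m p η i j y := by
  obtain ⟨hv1, hv2⟩ := p.perm_mem y hy1 hy2
  obtain ⟨i, hi, hcol⟩ := exists_le_lt_succ (f := colExt m p η) (Nat.zero_le (y - 1))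
    (show y - 1 < colExt m p η (m.len + 1) by rw [colExt_of_len_lt (by omega)]; omega)
  obtain ⟨j, hj, hval⟩ := exists_le_lt_succ (f := valExt m p η) (Nat.zero_le (p.perm y - 1))
    (show p.perm y - 1 < valExt m p η (m.len + 1) by rw [valExt_of_len_lt (by omega)]; omega)
  have hcol' : colExt m p η (i + 1) ≠ y := by
    rcases Nat.lt_or_ge m.len (i + 1) with h | h
    · rw [colExt_of_len_lt h]; omega
    · rw [colExt_of_le (by omega) h]; exact hne _ (by omega) h
  have hval' : valExt m p η (j + 1) ≠ p.perm y := by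
    rcases Nat.lt_or_ge m.len (j + 1) with h | h
    · rw [valExt_of_len_lt h]; omega
    · obtain ⟨hp1, hp2⟩ := pos_mem (m := m) (v := j + 1) (by omega) h
      obtain ⟨hη1, hη2⟩ := hη.mem _ hp1 hp2
      rw [valExt_of_le (by omega) h]
      exact fun he => hne _ hp1 hp2 (p.perm_inj _ _ hη1 hη2 hy1 hy2 he)
  exact ⟨i, hi, j, hj, by omega, by omega, by omega, by omega⟩

end Regions

/-- All boxes in `[i₁, i₂] × [j₁, j₂]` are shaded and no point lies in the interior of their
union; box `(a, b)` has the points at positions `a` and `a + 1` as left and right neighbours. -/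
structure IsEmptyShadedRect (p : MeshPattern) (i₁ i₂ j₁ j₂ : ℕ) : Prop where
  right_le : i₂ ≤ p.len
  top_le : j₂ ≤ p.len
  shaded : ∀ a b, i₁ ≤ a → a ≤ i₂ → j₁ ≤ b → b ≤ j₂ → (a, b) ∈ p.sh
  empty : ∀ y, 1 ≤ y → y ≤ p.len → i₁ < y → y ≤ i₂ → ¬(j₁ < p.perm y ∧ p.perm y ≤ j₂)

def IsAnchoredAt (p : MeshPattern) (a b : ℕ) : Prop :=
  ∃ i₁ i₂ j₁ j₂, i₁ ≤ a ∧ a ≤ i₂ ∧ j₁ ≤ b ∧ b ≤ j₂ ∧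
    (i₁ = 0 ∨ i₂ = p.len ∨ j₁ = 0 ∨ j₂ = p.len) ∧ IsEmptyShadedRect p i₁ i₂ j₁ j₂

def IsAnchored (p : MeshPattern) : Prop := ∀ q ∈ p.sh, IsAnchoredAt p q.1 q.2

theorem isAnchoredAt_of_mem_of_edge {p : MeshPattern} {a b : ℕ} (hab : (a, b) ∈ p.sh)
    (hedge : a = 0 ∨ a = p.len ∨ b = 0 ∨ b = p.len) : IsAnchoredAt p a b := by
  obtain ⟨ha, hb⟩ := p.sh_mem _ hab
  refine ⟨a, a, b, b, le_rfl, le_rfl, le_rfl, le_rfl, hedge, ha, hb, ?_, ?_⟩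
  · intro a' b' h1 h2 h3 h4
    rwa [le_antisymm h2 h1, le_antisymm h4 h3]
  · intro y _ _ h1 h2
    omega

theorem isAnchored_of_len_le_one {p : MeshPattern} (hp : p.len ≤ 1) : IsAnchored p :=
  fun q hq => isAnchoredAt_of_mem_of_edge hq (by have := p.sh_mem q hq; omega)

section Transfer

variable {m p : MeshPattern} {η : ℕ → ℕ}

theorem IsOcc.isEmptyShadedRect (hη : IsOcc m p η) {i₁ i₂ j₁ j₂ : ℕ}
    (hR : IsEmptyShadedRect m i₁ i₂ j₁ j₂) :
    IsEmptyShadedRect p (colExt m p η i₁) (colExt m p η (i₂ + 1) - 1)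
      (valExt m p η j₁) (valExt m p η (j₂ + 1) - 1) where
  right_le := by have := hη.colExt_le_len_succ (i₂ + 1); omega
  top_le := by have := hη.valExt_le_len_succ (j₂ + 1); omega
  shaded a b ha₁ ha₂ hb₁ hb₂ := by
    have := hη.colExt_lt (i := 0) (j := i₂ + 1) (by omega) (by have := hR.right_le; omega)
    have := hη.valExt_lt (i := 0) (j := j₂ + 1) (by omega) (by have := hR.top_le; omega)
    have := hη.colExt_le_len_succ (i₂ + 1)
    have := hη.valExt_le_len_succ (j₂ + 1)
    obtain ⟨i, -, j, -, hi₁, hi₂, hj₁, hj₂⟩ := exists_inRegion (m := m) (p := p) (η := η)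
      (a := a) (b := b) (by omega) (by omega)
    obtain ⟨hi, hi'⟩ := hη.monotone_colExt.mem_Icc_of_mem_Ico (i₂ := i₂) ⟨ha₁, by omega⟩ ⟨hi₁, hi₂⟩
    obtain ⟨hj, hj'⟩ := hη.monotone_valExt.mem_Icc_of_mem_Ico (i₂ := j₂) ⟨hb₁, by omega⟩ ⟨hj₁, hj₂⟩
    exact hη.shaded (i, j) (hR.shaded i j hi hi' hj hj') a b ⟨hi₁, hi₂, hj₁, hj₂⟩
  empty y hy₁ hy₂ hi₁ hi₂ hj := by
    by_cases hocc : ∃ i, 1 ≤ i ∧ i ≤ m.len ∧ η i = y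
    · -- the point `y` is the image of a point of `m`, which then lies inside the rectangle
      obtain ⟨i, h₁, h₂, rfl⟩ := hocc
      rw [← colExt_of_le (p := p) (η := η) h₁ h₂] at hi₁ hi₂
      rw [← valExt_perm (p := p) (η := η) h₁ h₂] at hj
      exact hR.empty i h₁ h₂ (hη.monotone_colExt.reflect_lt hi₁)
        (Nat.lt_add_one_iff.mp (hη.monotone_colExt.reflect_lt (by omega)))
        ⟨hη.monotone_valExt.reflect_lt hj.1,
          Nat.lt_add_one_iff.mp (hη.monotone_valExt.reflect_lt (by omega))⟩
    · push Not at hocc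
      obtain ⟨i, -, j, -, hc₁, hc₂, hv₁, hv₂⟩ := hη.exists_interiorPt hy₁ hy₂ hocc
      obtain ⟨hi, hi'⟩ :=
        hη.monotone_colExt.mem_Icc_of_mem_Ico (i₂ := i₂) ⟨hi₁.le, by omega⟩ ⟨hc₁.le, hc₂⟩
      obtain ⟨hj, hj'⟩ :=
        hη.monotone_valExt.mem_Icc_of_mem_Ico (i₂ := j₂) ⟨hj.1.le, by omega⟩ ⟨hv₁.le, hv₂⟩
      exact hη.no_point (i, j) (hR.shaded i j hi hi' hj hj') y hy₁ hy₂ ⟨hc₁, hc₂, hv₁, hv₂⟩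

theorem IsOcc.isAnchoredAt (hη : IsOcc m p η) {i j a b : ℕ} (hij : IsAnchoredAt m i j)
    (hab : inRegion m p η i j a b) : IsAnchoredAt p a b := by
  obtain ⟨i₁, i₂, j₁, j₂, hi₁, hi₂, hj₁, hj₂, hedge, hR⟩ := hij
  obtain ⟨ha₁, ha₂, hb₁, hb₂⟩ := hab
  have hc₁ := hη.monotone_colExt hi₁
  have hc₂ := hη.monotone_colExt (Nat.add_le_add_right hi₂ 1)
  have hv₁ := hη.monotone_valExt hj₁
  have hv₂ := hη.monotone_valExt (Nat.add_le_add_right hj₂ 1)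
  refine ⟨_, _, _, _, by omega, by omega, by omega, by omega, ?_, hη.isEmptyShadedRect hR⟩
  rcases hedge with rfl | rfl | rfl | rfl
  · exact Or.inl colExt_zero
  · exact Or.inr (Or.inl (by rw [colExt_of_len_lt (Nat.lt_succ_self _)]; rfl))
  · exact Or.inr (Or.inr (Or.inl valExt_zero))
  · exact Or.inr (Or.inr (Or.inr (by rw [valExt_of_len_lt (Nat.lt_succ_self _)]; rfl)))

end Transfer

section SameLength

variable {m p : MeshPattern} {η : ℕ → ℕ} {i j : ℕ}

theorem IsOcc.le_apply (hη : IsOcc m p η) : ∀ {i}, 1 ≤ i → i ≤ m.len → i ≤ η i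
  | 0, h1, _ => absurd h1 (by omega)
  | 1, _, h2 => (hη.mem 1 le_rfl h2).1
  | i + 2, _, h2 => by
    have := hη.le_apply (i := i + 1) (by omega) (by omega)
    have := hη.mono (i + 1) (i + 2) (by omega) (by omega) h2
    omega

theorem IsOcc.apply_add_le (hη : IsOcc m p η) (h1 : 1 ≤ i) (h2 : i ≤ m.len) :
    η i + (m.len - i) ≤ p.len := by
  induction h : m.len - i generalizing i with
  | zero => have := (hη.mem i h1 h2).2; omega
  | succ k ih =>
    have := ih (i := i + 1) (by omega) (by omega) (by omega)
    have := hη.mono i (i + 1) h1 (by omega) (by omega)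
    omega

theorem IsOcc.len_le (hη : IsOcc m p η) : m.len ≤ p.len := by
  rcases Nat.eq_zero_or_pos m.len with h | h
  · omega
  · have := hη.apply_add_le le_rfl h
    have := (hη.mem 1 le_rfl h).1
    omega

theorem IsOcc.apply_eq_self (hη : IsOcc m p η) (hlen : m.len = p.len) (h1 : 1 ≤ i)
    (h2 : i ≤ m.len) : η i = i := by
  have := hη.le_apply h1 h2
  have := hη.apply_add_le h1 h2
  omega

theorem card_filter_perm_le (m : MeshPattern) {v : ℕ} (hv : v ≤ m.len) :
    ((Finset.Icc 1 m.len).filter (fun l => m.perm l ≤ v)).card = v := by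
  have himage : ((Finset.Icc 1 m.len).filter (fun l => m.perm l ≤ v)).image m.perm
      = Finset.Icc 1 v := by
    ext w
    simp only [Finset.mem_image, Finset.mem_filter, Finset.mem_Icc]
    constructor
    · rintro ⟨l, ⟨⟨hl1, hl2⟩, hlv⟩, rfl⟩
      exact ⟨(m.perm_mem l hl1 hl2).1, hlv⟩
    · rintro ⟨hw1, hw2⟩
      obtain ⟨l, hl1, hl2, rfl⟩ := m.perm_surj w hw1 (hw2.trans hv)
      exact ⟨l, ⟨⟨hl1, hl2⟩, hw2⟩, rfl⟩
  have hcard := Nat.card_Icc 1 v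
  rw [← himage, Finset.card_image_of_injOn] at hcard
  · omega
  · intro x hx y hy hxy
    simp only [Finset.coe_filter, Finset.mem_Icc, Set.mem_ofPred_eq] at hx hy
    exact m.perm_inj x y hx.1.1 hx.1.2 hy.1.1 hy.1.2 hxy

-- The value at `i` is the number of entries not exceeding it.
theorem perm_eq_of_lt_iff_lt (hlen : m.len = p.len)
    (hlt : ∀ i j, 1 ≤ i → i ≤ m.len → 1 ≤ j → j ≤ m.len →
      (m.perm i < m.perm j ↔ p.perm i < p.perm j)) : m.perm = p.perm := by
  funext i
  by_cases hi : 1 ≤ i ∧ i ≤ m.len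
  · have hfilter : (Finset.Icc 1 m.len).filter (fun l => m.perm l ≤ m.perm i)
        = (Finset.Icc 1 p.len).filter (fun l => p.perm l ≤ p.perm i) := by
      rw [← hlen]
      refine Finset.filter_congr fun l hl => ?_
      rw [Finset.mem_Icc] at hl
      simpa only [not_lt] using (hlt i l hi.1 hi.2 hl.1 hl.2).not
    have hm := card_filter_perm_le m (m.perm_le_len i)
    rw [hfilter, card_filter_perm_le p (p.perm_le_len i)] at hm
    exact hm.symm
  · rw [m.perm_zero i (by omega), p.perm_zero i (by omega)]

theorem colExt_eq_self (hlen : m.len = p.len) (hη : ∀ i, 1 ≤ i → i ≤ m.len → η i = i)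
    (hi : i ≤ m.len + 1) : colExt m p η i = i := by
  rcases Nat.eq_zero_or_pos i with rfl | h0
  · rfl
  rcases Nat.lt_or_ge m.len i with h | h
  · rw [colExt_of_len_lt h]; omega
  · rw [colExt_of_le h0 h, hη i h0 h]

theorem valExt_eq_self (hlen : m.len = p.len) (hperm : m.perm = p.perm)
    (hη : ∀ i, 1 ≤ i → i ≤ m.len → η i = i) (hj : j ≤ m.len + 1) : valExt m p η j = j := by
  rcases Nat.eq_zero_or_pos j with rfl | h0
  · rfl
  rcases Nat.lt_or_ge m.len j with h | h
  · rw [valExt_of_len_lt h]; omega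
  · obtain ⟨hp1, hp2⟩ := pos_mem h0 h
    rw [valExt_of_le h0 h, hη _ hp1 hp2, ← hperm, perm_pos h0 h]

theorem inRegion_self_iff (hlen : m.len = p.len) (hperm : m.perm = p.perm)
    (hη : ∀ i, 1 ≤ i → i ≤ m.len → η i = i) (hi : i ≤ m.len) (hj : j ≤ m.len) {a b : ℕ} :
    inRegion m p η i j a b ↔ a = i ∧ b = j := by
  unfold inRegion
  rw [colExt_eq_self hlen hη (by omega), colExt_eq_self hlen hη (by omega),
    valExt_eq_self hlen hperm hη (by omega), valExt_eq_self hlen hperm hη (by omega)]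
  omega

theorem IsOcc.perm_eq_and_sh_subset (hη : IsOcc m p η) (hlen : m.len = p.len) :
    m.perm = p.perm ∧ m.sh ⊆ p.sh := by
  have hid : ∀ i, 1 ≤ i → i ≤ m.len → η i = i := fun _ => hη.apply_eq_self hlen
  have hperm : m.perm = p.perm := perm_eq_of_lt_iff_lt hlen fun i j hi1 hi2 hj1 hj2 => by
    simpa only [hid i hi1 hi2, hid j hj1 hj2] using hη.pattern i j hi1 hi2 hj1 hj2
  refine ⟨hperm, fun q hq => ?_⟩
  obtain ⟨hq1, hq2⟩ := m.sh_mem q hq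
  exact hη.shaded q hq q.1 q.2 ((inRegion_self_iff hlen hperm hid hq1 hq2).2 ⟨rfl, rfl⟩)

theorem isOcc_eta1 (hlen : m.len = p.len) (hperm : m.perm = p.perm) (hsh : m.sh ⊆ p.sh) :
    IsOcc m p (eta1 m) := by
  have hid : ∀ i, 1 ≤ i → i ≤ m.len → eta1 m i = i := fun i h1 h2 => if_pos ⟨h1, h2⟩
  refine ⟨fun i hi => if_neg (by omega), fun i h1 h2 => ?_, fun i j h1 hij hj => ?_,
    fun i j hi1 hi2 hj1 hj2 => ?_, fun q hq y _ _ hy => ?_, fun q hq a b hab => ?_⟩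
  · rw [hid i h1 h2]; omega
  · rw [hid i h1 (by omega), hid j (by omega) hj]; exact hij
  · rw [hid i hi1 hi2, hid j hj1 hj2, hperm]
  · obtain ⟨hq1, -⟩ := m.sh_mem q hq
    have h1 := hy.1
    have h2 := hy.2.1
    rw [colExt_eq_self hlen hid (by omega)] at h1 h2
    omega
  · obtain ⟨hq1, hq2⟩ := m.sh_mem q hq
    obtain ⟨rfl, rfl⟩ := (inRegion_self_iff hlen hperm hid hq1 hq2).1 hab
    exact hsh hq

theorem IsOcc.card_sh_le (hη : IsOcc m p η) : m.sh.card ≤ p.sh.card := by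
  refine Finset.card_le_card_of_injOn (fun q => (colExt m p η q.1, valExt m p η q.2))
    (fun q hq => ?_) (fun q hq r hr hqr => ?_)
  · obtain ⟨h1, h2⟩ := m.sh_mem q hq
    exact hη.shaded q hq _ _ ⟨le_rfl, hη.colExt_lt_succ h1, le_rfl, hη.valExt_lt_succ h2⟩
  · obtain ⟨hq1, hq2⟩ := m.sh_mem q (Finset.mem_coe.mp hq)
    obtain ⟨hr1, hr2⟩ := m.sh_mem r (Finset.mem_coe.mp hr)
    obtain ⟨h1, h2⟩ := Prod.mk.inj hqr
    refine Prod.ext ?_ ?_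
    · by_contra hne
      rcases Nat.lt_or_gt_of_ne hne with h | h
      · exact (hη.colExt_lt h (by omega)).ne h1
      · exact (hη.colExt_lt h (by omega)).ne' h1
    · by_contra hne
      rcases Nat.lt_or_gt_of_ne hne with h | h
      · exact (hη.valExt_lt h (by omega)).ne h2
      · exact (hη.valExt_lt h (by omega)).ne' h2

end SameLength

def restrictShading (p : MeshPattern) (B : Finset (ℕ × ℕ)) : MeshPattern :=
  p.reshade (B ∩ p.sh) Finset.inter_subset_right

section Restrict

variable {c p : MeshPattern} {η : ℕ → ℕ} {A B : Finset (ℕ × ℕ)}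

@[simp] theorem restrictShading_len : (p.restrictShading B).len = p.len := rfl

@[simp] theorem restrictShading_perm : (p.restrictShading B).perm = p.perm := rfl

@[simp] theorem restrictShading_sh : (p.restrictShading B).sh = B ∩ p.sh := rfl

theorem restrictShading_sh_of_subset (hB : B ⊆ p.sh) : (p.restrictShading B).sh = B :=
  Finset.inter_eq_left.mpr hB

theorem restrictShading_self (p : MeshPattern) : p.restrictShading p.sh = p :=
  ext rfl rfl (Finset.inter_self _)

theorem IsOcc.restrictShading_mono (hη : IsOcc c (p.restrictShading A) η)
    (h : A ∩ p.sh ⊆ B ∩ p.sh) : IsOcc c (p.restrictShading B) η :=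
  ⟨hη.zero, hη.mem, hη.mono, hη.pattern, hη.no_point,
    fun q hq a b hab => h (hη.shaded q hq a b hab)⟩

theorem IsOcc.restrictShading_of_not_inRegion {β : ℕ × ℕ}
    (hη : IsOcc c (p.restrictShading (insert β A)) η)
    (hβ : ∀ q ∈ c.sh, ¬ inRegion c p η q.1 q.2 β.1 β.2) : IsOcc c (p.restrictShading A) η := by
  refine ⟨hη.zero, hη.mem, hη.mono, hη.pattern, hη.no_point, fun q hq a b hab => ?_⟩
  obtain ⟨hins, hsh⟩ := Finset.mem_inter.mp (hη.shaded q hq a b hab)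
  rcases Finset.mem_insert.mp hins with rfl | hA
  · exact absurd hab (hβ q hq)
  · exact Finset.mem_inter.mpr ⟨hA, hsh⟩

theorem IsAnchoredAt.of_restrictShading {a b : ℕ} (h : IsAnchoredAt (p.restrictShading B) a b) :
    IsAnchoredAt p a b := by
  obtain ⟨i₁, i₂, j₁, j₂, h₁, h₂, h₃, h₄, hedge, hR⟩ := h
  exact ⟨i₁, i₂, j₁, j₂, h₁, h₂, h₃, h₄, hedge, hR.right_le, hR.top_le,
    fun a b ha₁ ha₂ hb₁ hb₂ => Finset.inter_subset_right (hR.shaded a b ha₁ ha₂ hb₁ hb₂), hR.empty⟩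

theorem restrictShading_le_restrictShading (h : A ⊆ B) :
    p.restrictShading A ≤ p.restrictShading B :=
  ⟨_, isOcc_eta1 rfl rfl (Finset.inter_subset_inter h le_rfl)⟩

theorem eq_restrictShading_of_le (h : c ≤ p) (hlen : c.len = p.len) :
    c.sh ⊆ p.sh ∧ c = p.restrictShading c.sh := by
  obtain ⟨η, hη⟩ := h
  obtain ⟨hperm, hsh⟩ := hη.perm_eq_and_sh_subset hlen
  exact ⟨hsh, ext hlen hperm (restrictShading_sh_of_subset hsh).symm⟩

end Restrict

theorem dim_lt_of_lt {c q : MeshPattern} (h : c < q) : c.dim < q.dim := by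
  obtain ⟨⟨η, hη⟩, hne⟩ := h
  have hlen := hη.len_le
  have hcard := hη.card_sh_le
  unfold dim
  rcases hlen.lt_or_eq with hlt | heq
  · omega
  · obtain ⟨hperm, hsh⟩ := hη.perm_eq_and_sh_subset heq
    have hssub : c.sh ⊂ q.sh := hsh.ssubset_of_ne fun h' => hne (ext heq hperm h')
    have := Finset.card_lt_card hssub
    omega

theorem finite_len_le (n : ℕ) : {c : MeshPattern | c.len ≤ n}.Finite := by
  classical
  let code : MeshPattern →
      Fin (n + 1) × (Fin (n + 1) → Fin (n + 1)) × Finset (Fin (n + 1) × Fin (n + 1)) :=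
    fun c => (Fin.clamp c.len n, fun i => Fin.clamp (c.perm i) n,
      Finset.univ.filter fun q => ((q.1 : ℕ), (q.2 : ℕ)) ∈ c.sh)
  refine Set.Finite.of_finite_image (Set.toFinite (code '' _)) fun c hc d hd hcd => ?_
  simp only [Set.mem_ofPred_eq] at hc hd
  simp only [code, Prod.mk.injEq] at hcd
  obtain ⟨hlen, hperm, hsh⟩ := hcd
  have hlen := Fin.eq_of_clamp_eq hc hd hlen
  refine ext hlen (funext fun i => ?_) (Finset.ext fun q => ?_)
  · by_cases hi : i ≤ n
    · exact Fin.eq_of_clamp_eq ((c.perm_le_len i).trans hc) ((d.perm_le_len i).trans hd)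
        (congrFun hperm ⟨i, by omega⟩)
    · rw [c.perm_zero i (by omega), d.perm_zero i (by omega)]
  · by_cases hq : q.1 ≤ n ∧ q.2 ≤ n
    · simpa using Finset.ext_iff.mp hsh (⟨q.1, by omega⟩, ⟨q.2, by omega⟩)
    · exact iff_of_false (fun h => hq (by have := c.sh_mem q h; omega))
        (fun h => hq (by have := d.sh_mem q h; omega))

theorem muFuel_congr {α : Type*} (r : α → α → Prop) {a : α} (d : α → ℕ)
    (hd : ∀ b c, r a c → r c b → c ≠ b → d c < d b) :
    ∀ {N M : ℕ} {b : α}, d b < N → d b < M → muFuel r N a b = muFuel r M a b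
  | 0, _, _, hN, _ => absurd hN (Nat.not_lt_zero _)
  | _ + 1, 0, _, _, hM => absurd hM (Nat.not_lt_zero _)
  | N + 1, M + 1, b, hN, hM => by
    simp only [muFuel]
    congr 2
    refine congrArg Neg.neg (finsum_mem_congr rfl fun c hc => ?_)
    have := hd b c hc.1 hc.2.1 hc.2.2
    exact muFuel_congr r d hd (by omega) (by omega)

theorem mu_eq_neg_finsum {m q : MeshPattern} (h : m < q) :
    mu m q = -∑ᶠ c ∈ {c | m ≤ c ∧ c ≤ q ∧ c ≠ q}, mu m c := by
  have hd : ∀ b c : MeshPattern, m ≤ c → c ≤ b → c ≠ b → c.dim < b.dim :=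
    fun _ _ _ hcb hne => dim_lt_of_lt ⟨hcb, hne⟩
  rw [mu, muFuel, if_neg h.2, if_pos h.1]
  congr 1
  refine finsum_mem_congr rfl fun c hc => ?_
  have := dim_lt_of_lt hc.2
  exact muFuel_congr _ dim hd this (Nat.lt_succ_self _)

theorem one0_le_iff {c : MeshPattern} : one0 ≤ c ↔ 1 ≤ c.len := by
  refine ⟨fun ⟨η, hη⟩ => hη.len_le, fun h => ⟨eta1 one0, ?_⟩⟩
  have hone : ∀ i, 1 ≤ i → i ≤ one0.len → i = 1 := fun i h1 h2 => by
    have : one0.len = 1 := rfl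
    omega
  refine ⟨fun i hi => if_neg (by omega), fun i h1 h2 => ?_, fun i j h1 hij hj => ?_,
    fun i j hi1 hi2 hj1 hj2 => ?_, fun q hq => absurd hq (Finset.notMem_empty q),
    fun q hq => absurd hq (Finset.notMem_empty q)⟩
  · obtain rfl := hone i h1 h2
    exact ⟨le_rfl, h⟩
  · have := hone i h1 (by omega)
    have := hone j (by omega) hj
    omega
  · obtain rfl := hone i hi1 hi2
    obtain rfl := hone j hj1 hj2
    simp

noncomputable def shorterThan (n : ℕ) : Finset MeshPattern :=
  ((finite_len_le n).subset fun c (hc : 1 ≤ c.len ∧ c.len < n) => hc.2.le).toFinset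

theorem mem_shorterThan {n : ℕ} {c : MeshPattern} : c ∈ shorterThan n ↔ 1 ≤ c.len ∧ c.len < n :=
  Set.Finite.mem_toFinset _

theorem restrictShading_restrictShading (p : MeshPattern) (A B : Finset (ℕ × ℕ)) :
    (p.restrictShading A).restrictShading B = p.restrictShading (B ∩ A) :=
  ext rfl rfl (Finset.inter_assoc _ _ _).symm

theorem one0_le_and_lt_restrictShading_iff {p c : MeshPattern} (hp : 1 ≤ p.len)
    {A : Finset (ℕ × ℕ)} (hA : A ⊆ p.sh) :
    (one0 ≤ c ∧ c ≤ p.restrictShading A ∧ c ≠ p.restrictShading A) ↔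
      (∃ B, (B ≠ A ∧ B ⊆ A) ∧ p.restrictShading B = c) ∨
        ((1 ≤ c.len ∧ c.len < p.len) ∧ c ≤ p.restrictShading A) := by
  have hAsh := restrictShading_sh_of_subset hA
  rw [one0_le_iff]
  constructor
  · rintro ⟨hc1, hcA, hne⟩
    have hlen : c.len ≤ p.len := by obtain ⟨η, hη⟩ := hcA; exact hη.len_le
    rcases hlen.lt_or_eq with hlt | heq
    · exact Or.inr ⟨⟨hc1, hlt⟩, hcA⟩
    · obtain ⟨hsub, hc⟩ := eq_restrictShading_of_le hcA heq
      rw [hAsh] at hsub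
      rw [restrictShading_restrictShading, Finset.inter_eq_left.mpr hsub] at hc
      exact Or.inl ⟨c.sh, ⟨fun h => hne (by rw [hc, h]), hsub⟩, hc.symm⟩
  · rintro (⟨B, ⟨hBA, hB⟩, rfl⟩ | ⟨⟨hc1, hcp⟩, hcA⟩)
    · refine ⟨hp, restrictShading_le_restrictShading hB, fun h => hBA ?_⟩
      have := congrArg sh h
      rwa [restrictShading_sh_of_subset (hB.trans hA), hAsh] at this
    · exact ⟨hc1, hcA, fun h => by rw [h] at hcp; simp at hcp⟩

open Classical in
theorem sum_powerset_mu_restrictShading {p : MeshPattern} (hp : 2 ≤ p.len)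
    {A : Finset (ℕ × ℕ)} (hA : A ⊆ p.sh) :
    ∑ B ∈ A.powerset, mu one0 (p.restrictShading B) =
      -∑ c ∈ shorterThan p.len, if c ≤ p.restrictShading A then mu one0 c else 0 := by
  classical
  have hlt : one0 < p.restrictShading A :=
    ⟨one0_le_iff.2 (by rw [restrictShading_len]; omega), fun h => by
      have := congrArg len h
      simp only [restrictShading_len] at this
      have : one0.len = 1 := rfl
      omega⟩
  have hinterval : {c | one0 ≤ c ∧ c ≤ p.restrictShading A ∧ c ≠ p.restrictShading A} =
      ↑((A.powerset.erase A).image p.restrictShading ∪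
        (shorterThan p.len).filter (· ≤ p.restrictShading A)) := by
    ext c
    simpa only [Set.mem_ofPred_eq, Finset.coe_union, Finset.coe_image, Finset.coe_filter,
      Set.mem_union, Set.mem_image, Finset.mem_coe, Finset.mem_erase, Finset.mem_powerset,
      mem_shorterThan] using one0_le_and_lt_restrictShading_iff (c := c) (by omega) hA
  have hdisj : Disjoint ((A.powerset.erase A).image p.restrictShading)
      ((shorterThan p.len).filter (· ≤ p.restrictShading A)) := by
    refine Finset.disjoint_left.mpr fun c hc hc' => ?_
    obtain ⟨B, -, rfl⟩ := Finset.mem_image.mp hc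
    have := (mem_shorterThan.mp (Finset.mem_filter.mp hc').1).2
    simp at this
  have hinj : Set.InjOn p.restrictShading ↑(A.powerset.erase A) := fun B hB B' hB' h => by
    have hB := Finset.mem_powerset.mp (Finset.mem_of_mem_erase hB)
    have hB' := Finset.mem_powerset.mp (Finset.mem_of_mem_erase hB')
    simpa [Finset.inter_eq_left.mpr (hB.trans hA), Finset.inter_eq_left.mpr (hB'.trans hA)]
      using congrArg sh h
  rw [← Finset.add_sum_erase _ _ (Finset.mem_powerset_self A), mu_eq_neg_finsum hlt,
    hinterval, finsum_mem_coe_finset, Finset.sum_union hdisj, Finset.sum_image hinj,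
    Finset.sum_filter]
  ring

theorem le_restrictShading_insert_iff {c p : MeshPattern} {β : ℕ × ℕ} {A : Finset (ℕ × ℕ)}
    (hc : IsAnchored c) (hβ : ¬ IsAnchoredAt p β.1 β.2) :
    c ≤ p.restrictShading (insert β A) ↔ c ≤ p.restrictShading A := by
  refine ⟨fun ⟨η, hη⟩ => ⟨η, hη.restrictShading_of_not_inRegion fun q hq hreg => hβ ?_⟩,
    fun ⟨η, hη⟩ => ⟨η, hη.restrictShading_mono
      (Finset.inter_subset_inter (Finset.subset_insert β A) le_rfl)⟩⟩
  exact (hη.isAnchoredAt (hc q hq) hreg).of_restrictShading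

theorem mu_eq_zero_of_not_isAnchoredAt {p : MeshPattern} (hp : 2 ≤ p.len)
    (hshorter : ∀ c : MeshPattern, c.len < p.len → mu one0 c ≠ 0 → IsAnchored c)
    {β : ℕ × ℕ} (hβp : β ∈ p.sh) (hβ : ¬ IsAnchoredAt p β.1 β.2) : mu one0 p = 0 := by
  classical
  have hinsert : ∀ A : Finset (ℕ × ℕ),
      (∑ c ∈ shorterThan p.len, if c ≤ p.restrictShading (insert β A) then mu one0 c else 0) =
        ∑ c ∈ shorterThan p.len, if c ≤ p.restrictShading A then mu one0 c else 0 :=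
    fun A => Finset.sum_congr rfl fun c hc => by
      by_cases hμ : mu one0 c = 0
      · simp [hμ]
      · rw [le_restrictShading_insert_iff (hshorter c (mem_shorterThan.mp hc).2 hμ) hβ]
  have hsum : ∀ A ⊆ p.sh.erase β,
      ∑ B ∈ A.powerset, mu one0 (p.restrictShading (insert β B)) = 0 := by
    intro A hA
    have hβA : β ∉ A := fun h => Finset.notMem_erase β p.sh (hA h)
    have hAp : A ⊆ p.sh := hA.trans (Finset.erase_subset β p.sh)
    have h1 := sum_powerset_mu_restrictShading hp (Finset.insert_subset hβp hAp)
    rw [Finset.sum_powerset_insert hβA, sum_powerset_mu_restrictShading hp hAp,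
      hinsert] at h1
    simpa using h1
  have := Finset.eq_zero_of_forall_sum_powerset_eq_zero (p.sh.erase β) hsum
  rwa [Finset.insert_erase hβp, restrictShading_self] at this

theorem isAnchored_of_mu_ne_zero (p : MeshPattern) (h : mu one0 p ≠ 0) : IsAnchored p := by
  induction hn : p.len using Nat.strong_induction_on generalizing p with
  | _ n ih =>
    by_cases hp : p.len ≤ 1
    · exact isAnchored_of_len_le_one hp
    · intro β hβp
      by_contra hβ
      exact h (mu_eq_zero_of_not_isAnchoredAt (by omega)
        (fun c hc hμ => ih c.len (hn ▸ hc) c hμ rfl) hβp hβ)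

section Total

variable {n : ℕ}

def ofPermShading (σ : Equiv.Perm (Fin n)) (S : Finset (Fin (n + 1) × Fin (n + 1))) :
    MeshPattern where
  len := n
  perm i := if h : 1 ≤ i ∧ i ≤ n then σ ⟨i - 1, by omega⟩ + 1 else 0
  sh := S.image fun q => ((q.1 : ℕ), (q.2 : ℕ))
  perm_mem i h1 h2 := by
    rw [dif_pos ⟨h1, h2⟩]
    exact ⟨Nat.succ_pos _, (σ _).isLt⟩
  perm_zero i h := dif_neg (by omega)
  perm_inj i j h1 h2 h3 h4 h := by
    rw [dif_pos ⟨h1, h2⟩, dif_pos ⟨h3, h4⟩, Nat.add_right_cancel_iff, Fin.val_inj,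
      σ.apply_eq_iff_eq, Fin.mk.injEq] at h
    omega
  perm_surj v h1 h2 := by
    refine ⟨σ.symm ⟨v - 1, by omega⟩ + 1, by omega, (σ.symm _).isLt, ?_⟩
    rw [dif_pos ⟨by omega, (σ.symm _).isLt⟩]
    simp only [Nat.add_sub_cancel, Fin.eta, Equiv.apply_symm_apply]
    omega
  sh_mem q hq := by
    obtain ⟨r, -, rfl⟩ := Finset.mem_image.mp hq
    exact ⟨Nat.le_of_lt_succ r.1.isLt, Nat.le_of_lt_succ r.2.isLt⟩

theorem ofPermShading_injective :
    Function.Injective fun x : Equiv.Perm (Fin n) × Finset (Fin (n + 1) × Fin (n + 1)) =>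
      ofPermShading x.1 x.2 := by
  rintro ⟨σ, S⟩ ⟨τ, T⟩ h
  have hperm := congrArg perm h
  have hsh := congrArg sh h
  simp only [ofPermShading] at hperm hsh
  refine Prod.ext (Equiv.ext fun i => Fin.ext ?_) (Finset.image_injective ?_ hsh)
  · have := congrFun hperm (i + 1)
    simp only [dif_pos (show 1 ≤ (i : ℕ) + 1 ∧ (i : ℕ) + 1 ≤ n by omega), Nat.add_sub_cancel,
      Fin.eta, Nat.add_right_cancel_iff] at this
    exact this
  · intro q r hqr
    simp only [Prod.mk.injEq] at hqr
    exact Prod.ext (Fin.ext hqr.1) (Fin.ext hqr.2)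

theorem exists_ofPermShading {p : MeshPattern} (hp : p.len = n) :
    ∃ σ S, ofPermShading (n := n) σ S = p := by
  classical
  subst hp
  have hlt : ∀ i : Fin p.len, p.perm (i + 1) - 1 < p.len := fun i => by
    have := p.perm_mem (i + 1) (by omega) i.isLt
    omega
  have hinj :
      Function.Injective fun i : Fin p.len => (⟨p.perm (i + 1) - 1, hlt i⟩ : Fin p.len) := by
    intro i j hij
    have h1 := p.perm_mem (i + 1) (by omega) i.isLt
    have h2 := p.perm_mem (j + 1) (by omega) j.isLt
    have := p.perm_inj (i + 1) (j + 1) (by omega) i.isLt (by omega) j.isLt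
      (by simp only [Fin.mk.injEq] at hij; omega)
    exact Fin.ext (by omega)
  refine ⟨Equiv.ofBijective _ (Finite.injective_iff_bijective.mp hinj),
    Finset.univ.filter fun q => ((q.1 : ℕ), (q.2 : ℕ)) ∈ p.sh, ext rfl (funext fun i => ?_) ?_⟩
  · simp only [ofPermShading]
    split_ifs with hi
    · simp only [Equiv.ofBijective_apply]
      have := p.perm_mem i hi.1 hi.2
      rw [Nat.sub_add_cancel hi.1]
      omega
    · exact (p.perm_zero i (by omega)).symm
  · ext q
    simp only [ofPermShading, Finset.mem_image, Finset.mem_filter, Finset.mem_univ, true_and]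
    constructor
    · rintro ⟨r, hr, rfl⟩
      exact hr
    · intro hq
      have := p.sh_mem q hq
      exact ⟨(⟨q.1, by omega⟩, ⟨q.2, by omega⟩), hq, rfl⟩

theorem ncard_len_eq (n : ℕ) : {p : MeshPattern | p.len = n}.ncard = Tcount n := by
  have hrange : Set.range (fun x : Equiv.Perm (Fin n) × Finset (Fin (n + 1) × Fin (n + 1)) =>
      ofPermShading x.1 x.2) = {p | p.len = n} := by
    ext p
    refine ⟨fun ⟨x, hx⟩ => hx ▸ rfl, fun hp => ?_⟩
    obtain ⟨σ, S, h⟩ := exists_ofPermShading hp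
    exact ⟨(σ, S), h⟩
  rw [← hrange, ← Set.image_univ, Set.ncard_image_of_injective _ ofPermShading_injective,
    Set.ncard_univ, Nat.card_eq_fintype_card, Fintype.card_prod, Fintype.card_perm,
    Fintype.card_finset, Fintype.card_prod, Fintype.card_fin, Fintype.card_fin, Tcount, sq]

end Total

section Staircase

variable {p : MeshPattern} {a b : ℕ}

/-- `a < leftReach p b` iff the box `(a, b)` lies in an empty shaded rectangle touching the
left edge; similarly for the other three edges, measured from that edge. -/
noncomputable def leftReach (p : MeshPattern) (b : ℕ) : ℕ :=
  reachBelow (p.len + 1) fun k => ∃ j₁ j₂, j₁ ≤ b ∧ b ≤ j₂ ∧ IsEmptyShadedRect p 0 k j₁ j₂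

noncomputable def rightReach (p : MeshPattern) (b : ℕ) : ℕ :=
  reachBelow (p.len + 1) fun k =>
    ∃ j₁ j₂, j₁ ≤ b ∧ b ≤ j₂ ∧ IsEmptyShadedRect p (p.len - k) p.len j₁ j₂

noncomputable def bottomReach (p : MeshPattern) (a : ℕ) : ℕ :=
  reachBelow (p.len + 1) fun k => ∃ i₁ i₂, i₁ ≤ a ∧ a ≤ i₂ ∧ IsEmptyShadedRect p i₁ i₂ 0 k

noncomputable def topReach (p : MeshPattern) (a : ℕ) : ℕ :=
  reachBelow (p.len + 1) fun k =>
    ∃ i₁ i₂, i₁ ≤ a ∧ a ≤ i₂ ∧ IsEmptyShadedRect p i₁ i₂ (p.len - k) p.len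

theorem isAnchoredAt_iff (ha : a ≤ p.len) (hb : b ≤ p.len) :
    IsAnchoredAt p a b ↔ a < leftReach p b ∨ p.len - a < rightReach p b ∨
      b < bottomReach p a ∨ p.len - b < topReach p a := by
  simp only [leftReach, rightReach, bottomReach, topReach, lt_reachBelow_iff]
  constructor
  · rintro ⟨i₁, i₂, j₁, j₂, h₁, h₂, h₃, h₄, hedge, hR⟩
    have := hR.right_le
    have := hR.top_le
    rcases hedge with rfl | rfl | rfl | rfl
    · exact Or.inl ⟨i₂, by omega, ⟨j₁, j₂, h₃, h₄, hR⟩, h₂⟩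
    · refine Or.inr (Or.inl ⟨p.len - i₁, by omega, ⟨j₁, j₂, h₃, h₄, ?_⟩, by omega⟩)
      rwa [Nat.sub_sub_self (h₁.trans h₂)]
    · exact Or.inr (Or.inr (Or.inl ⟨j₂, by omega, ⟨i₁, i₂, h₁, h₂, hR⟩, h₄⟩))
    · refine Or.inr (Or.inr (Or.inr ⟨p.len - j₁, by omega, ⟨i₁, i₂, h₁, h₂, ?_⟩, by omega⟩))
      rwa [Nat.sub_sub_self (h₃.trans h₄)]
  · rintro (⟨k, hk, ⟨j₁, j₂, h₃, h₄, hR⟩, hak⟩ | ⟨k, hk, ⟨j₁, j₂, h₃, h₄, hR⟩, hak⟩ |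
      ⟨k, hk, ⟨i₁, i₂, h₁, h₂, hR⟩, hbk⟩ | ⟨k, hk, ⟨i₁, i₂, h₁, h₂, hR⟩, hbk⟩)
    · exact ⟨0, k, j₁, j₂, Nat.zero_le a, hak, h₃, h₄, Or.inl rfl, hR⟩
    · exact ⟨p.len - k, p.len, j₁, j₂, by omega, ha, h₃, h₄, Or.inr (Or.inl rfl), hR⟩
    · exact ⟨i₁, i₂, 0, k, h₁, h₂, Nat.zero_le b, hbk, Or.inr (Or.inr (Or.inl rfl)), hR⟩
    · exact ⟨i₁, i₂, p.len - k, p.len, h₁, h₂, by omega, hb, Or.inr (Or.inr (Or.inr rfl)), hR⟩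

theorem IsAnchoredAt.mem_sh (h : IsAnchoredAt p a b) : (a, b) ∈ p.sh := by
  obtain ⟨i₁, i₂, j₁, j₂, h₁, h₂, h₃, h₄, -, hR⟩ := h
  exact hR.shaded a b h₁ h₂ h₃ h₄

theorem IsAnchored.mem_sh_iff (hp : IsAnchored p) :
    (a, b) ∈ p.sh ↔ a ≤ p.len ∧ b ≤ p.len ∧ (a < leftReach p b ∨ p.len - a < rightReach p b ∨
      b < bottomReach p a ∨ p.len - b < topReach p a) := by
  refine ⟨fun h => ?_, fun ⟨ha, hb, h⟩ => ((isAnchoredAt_iff ha hb).mpr h).mem_sh⟩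
  obtain ⟨ha, hb⟩ := p.sh_mem _ h
  exact ⟨ha, hb, (isAnchoredAt_iff ha hb).mp (hp _ h)⟩

noncomputable def staircases (p : MeshPattern) : Fin 4 → ℕ → ℕ :=
  ![leftReach p, rightReach p, bottomReach p, topReach p]

theorem staircases_le (p : MeshPattern) (k : Fin 4) (x : ℕ) : p.staircases k x ≤ p.len + 1 := by
  fin_cases k <;> exact reachBelow_le _ _

-- Clamping only serves to land in a finite type; nothing is lost for patterns of length `n`.
noncomputable def staircaseCode (n : ℕ) (p : MeshPattern) :
    (Fin n → Fin (n + 1)) × (Fin 4 → Fin (n + 1) → Fin (n + 2)) :=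
  (fun i => Fin.clamp (p.perm (i + 1)) n, fun k x => Fin.clamp (p.staircases k x) (n + 1))

theorem staircaseCode_injOn (n : ℕ) :
    Set.InjOn (staircaseCode n) {p | p.len = n ∧ IsAnchored p} := by
  rintro p ⟨hp, hpA⟩ q ⟨hq, hqA⟩ hpq
  simp only [staircaseCode, Prod.mk.injEq] at hpq
  obtain ⟨hperm, hstair⟩ := hpq
  have hs : ∀ k, ∀ x ≤ n, p.staircases k x = q.staircases k x := fun k x hx =>
    Fin.eq_of_clamp_eq (hp ▸ p.staircases_le k x) (hq ▸ q.staircases_le k x)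
      (congrFun (congrFun hstair k) ⟨x, by omega⟩)
  refine ext (hp.trans hq.symm) (funext fun i => ?_) (Finset.ext fun ⟨a, b⟩ => ?_)
  · by_cases hi : 1 ≤ i ∧ i ≤ n
    · have := congrFun hperm ⟨i - 1, by omega⟩
      simp only [Nat.sub_add_cancel hi.1] at this
      exact Fin.eq_of_clamp_eq (hp ▸ p.perm_le_len i) (hq ▸ q.perm_le_len i) this
    · rw [p.perm_zero i (by omega), q.perm_zero i (by omega)]
  · rw [hpA.mem_sh_iff, hqA.mem_sh_iff, hp, hq]
    refine and_congr_right fun ha => and_congr_right fun hb => ?_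
    rw [show leftReach p b = leftReach q b from hs 0 b hb,
      show rightReach p b = rightReach q b from hs 1 b hb,
      show bottomReach p a = bottomReach q a from hs 2 a ha,
      show topReach p a = topReach q a from hs 3 a ha]

theorem ncard_isAnchored_le (n : ℕ) :
    {p : MeshPattern | p.len = n ∧ IsAnchored p}.ncard ≤ (n + 1) ^ n * (n + 2) ^ (4 * (n + 1)) := by
  calc {p : MeshPattern | p.len = n ∧ IsAnchored p}.ncard
      ≤ (Set.univ : Set ((Fin n → Fin (n + 1)) × (Fin 4 → Fin (n + 1) → Fin (n + 2)))).ncard :=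
        Set.ncard_le_ncard_of_injOn _ (fun _ _ => Set.mem_univ _) (staircaseCode_injOn n)
    _ = (n + 1) ^ n * (n + 2) ^ (4 * (n + 1)) := by
        rw [Set.ncard_univ, Nat.card_eq_fintype_card]
        simp only [Fintype.card_prod, Fintype.card_fun, Fintype.card_fin]
        ring

end Staircase

theorem ncard_mu_ne_zero_le (n : ℕ) :
    {p : MeshPattern | p.len = n ∧ mu one0 p ≠ 0}.ncard ≤ (n + 2) ^ (5 * (n + 1)) :=
  calc {p : MeshPattern | p.len = n ∧ mu one0 p ≠ 0}.ncard
      ≤ {p : MeshPattern | p.len = n ∧ IsAnchored p}.ncard :=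
        Set.ncard_le_ncard (fun p hp => ⟨hp.1, isAnchored_of_mu_ne_zero p hp.2⟩)
          ((finite_len_le n).subset fun _ hp => hp.1.le)
    _ ≤ (n + 1) ^ n * (n + 2) ^ (4 * (n + 1)) := ncard_isAnchored_le n
    _ ≤ (n + 2) ^ (n + 1) * (n + 2) ^ (4 * (n + 1)) :=
        Nat.mul_le_mul_right _ ((Nat.pow_le_pow_left (n + 1).le_succ n).trans
          (Nat.pow_le_pow_right (by omega) n.le_succ))
    _ = (n + 2) ^ (5 * (n + 1)) := by ring

theorem Zcount_add_ncard_mu_ne_zero (n : ℕ) :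
    Zcount n + {p : MeshPattern | p.len = n ∧ mu one0 p ≠ 0}.ncard = Tcount n := by
  have hfin := (finite_len_le n).subset fun (p : MeshPattern) (hp : p.len = n) => hp.le
  rw [Zcount, ← Set.ncard_union_eq (Set.disjoint_left.mpr fun p hp hp' => hp'.2 hp.2)
    (hfin.subset fun p hp => hp.1) (hfin.subset fun p hp => hp.1), ← ncard_len_eq n]
  congr 1
  ext p
  simp only [Set.mem_union, Set.mem_ofPred_eq]
  tauto

/-- The proportion of mesh patterns `p` of length `n` with `μ(1^∅, p) = 0` tends to `1`
as `n` tends to infinity. -/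
theorem proportion_mu_zero_tendsto_one :
    Filter.Tendsto (fun n => (Zcount n : ℝ) / (Tcount n : ℝ)) Filter.atTop (nhds 1) := by
  have hT : ∀ n, (2 : ℝ) ^ ((n + 1) ^ 2) ≤ Tcount n := fun n => by
    exact_mod_cast Nat.le_mul_of_pos_left _ n.factorial_pos
  have hbad : Filter.Tendsto
      (fun n => ({p : MeshPattern | p.len = n ∧ mu one0 p ≠ 0}.ncard : ℝ) / Tcount n)
      Filter.atTop (nhds 0) := by
    refine squeeze_zero (fun n => by positivity) (fun n => ?_)
      (tendsto_pow_mul_succ_div_two_pow_sq 5)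
    refine div_le_div₀ (by positivity) ?_ (by positivity) (hT n)
    exact_mod_cast ncard_mu_ne_zero_le n
  refine (sub_zero (1 : ℝ) ▸ hbad.const_sub 1).congr fun n => ?_
  have hTpos : (0 : ℝ) < Tcount n := lt_of_lt_of_le (by positivity) (hT n)
  have hsum :
      (Zcount n : ℝ) + {p : MeshPattern | p.len = n ∧ mu one0 p ≠ 0}.ncard = Tcount n := by
    exact_mod_cast Zcount_add_ncard_mu_ne_zero n
  rw [eq_div_iff hTpos.ne', sub_mul, div_mul_cancel₀ _ hTpos.ne']
  linarith

end MeshPattern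
end
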